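/- arXiv:2305.08484 — 10 statements merged into one kernel-verified Lean document; each statement's English description precedes it below -/
import Mathlib

section
/- The quasiuniform infimum admits the following equivalent representations: Λ†_U(φ1,φ2) = inf_{V∈EI(U)} sup_{η>0} inf{ φ1(x1)+φ2(x2) : x1 ∈ V, x2 ∈ X, d(x1,x2) < η } = inf_{V∈EIᶜˡ(U)} sup_{η>0} inf{ φ1(x1)+φ2(x2) : x1, x2 ∈ V, d(x1,x2) < η } = inf_{V∈EIᶜˡ(U)} sup_{η>0} inf{ φ1(x1)+φ2(x2) : x1 ∈ V, x2 ∈ X, d(x1,x2) < η }, where EIᶜˡ(U) denotes the collection of closed essentially interior subsets of U. -/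
open Metric Set Filter

noncomputable section

/-- `V` is an essentially interior subset of `U`. -/
def EssInt {X : Type*} [MetricSpace X] (U V : Set X) : Prop :=
  ∃ ρ > (0 : ℝ), ∀ v ∈ V, Metric.ball v ρ ⊆ U

/-- The uniform infimum `Λ°_W(φ1,φ2)` of the decoupled sum over `W`. -/
def lambdaCirc {X : Type*} [MetricSpace X] (φ1 φ2 : X → EReal) (W : Set X) : EReal :=
  ⨆ η : {η : ℝ // 0 < η},
    sInf {v : EReal | ∃ x1 ∈ W, ∃ x2 ∈ W, dist x1 x2 < η.1 ∧ v = φ1 x1 + φ2 x2}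

/-- The quasiuniform infimum `Λ†_U(φ1,φ2)`. -/
def lambdaDag {X : Type*} [MetricSpace X] (φ1 φ2 : X → EReal) (U : Set X) : EReal :=
  ⨅ V : {V : Set X // EssInt U V}, lambdaCirc φ1 φ2 V.1

/-- `inf_U (φ1 + φ2)`. -/
def infSum {X : Type*} [MetricSpace X] (φ1 φ2 : X → EReal) (U : Set X) : EReal :=
  sInf {v : EReal | ∃ x ∈ U, v = φ1 x + φ2 x}

/-- `(φ1 ♦ φ2)_W (x1, x2)`. -/
def diamond {X : Type*} [MetricSpace X] (φ1 φ2 : X → EReal) (W : Set X) (x1 x2 : X) : EReal :=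
  sInf {v : EReal | ∃ x ∈ W,
    v = max (max ((dist x x1 : ℝ) : EReal) ((dist x x2 : ℝ) : EReal))
        (φ1 x + φ2 x - φ1 x1 - φ2 x2)}

/-- `Θ°_U(φ1,φ2)` (with the convention `sup ∅ = 0`). -/
def thetaCirc {X : Type*} [MetricSpace X] (φ1 φ2 : X → EReal) (U : Set X) : EReal :=
  ⨅ η : {η : ℝ // 0 < η},
    sSup (insert (0 : EReal)
      {v : EReal | ∃ x1 x2 : X, φ1 x1 < ⊤ ∧ x1 ∈ U ∧ φ2 x2 < ⊤ ∧ x2 ∈ U ∧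
        dist x1 x2 < η.1 ∧ v = diamond φ1 φ2 U x1 x2})

/-- `Θ†_{U,W}(φ1,φ2)`: as `Θ†_U`, but with the `♦`-expression taken over `W`. -/
def thetaDagW {X : Type*} [MetricSpace X] (φ1 φ2 : X → EReal) (U W : Set X) : EReal :=
  ⨆ V : {V : Set X // EssInt U V}, ⨅ η : {η : ℝ // 0 < η},
    sSup (insert (0 : EReal)
      {v : EReal | ∃ x1 x2 : X, φ1 x1 < ⊤ ∧ x1 ∈ V.1 ∧ φ2 x2 < ⊤ ∧ x2 ∈ V.1 ∧
        dist x1 x2 < η.1 ∧ v = diamond φ1 φ2 W x1 x2})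

/-- `Θ†_U(φ1,φ2)` (with the convention `sup ∅ = 0`). -/
def thetaDag {X : Type*} [MetricSpace X] (φ1 φ2 : X → EReal) (U : Set X) : EReal :=
  thetaDagW φ1 φ2 U U

/-- Indicator function of a set, in the `ℝ ∪ {+∞}` sense. -/
def indFn {X : Type*} (Ω : Set X) : X → EReal := fun x =>
  haveI := Classical.propDecidable (x ∈ Ω)
  if x ∈ Ω then 0 else ⊤

/-- `Λ_U(φ1,φ2)`: the uniform infimum of `(φ1,φ2)` around `U`. -/
def lambdaFull {X : Type*} [MetricSpace X] (φ1 φ2 : X → EReal) (U : Set X) : EReal :=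
  ⨆ η : {η : ℝ // 0 < η}, ⨆ ε : {ε : ℝ // 0 < ε},
    sInf {v : EReal | ∃ x1 x2 : X,
      dist x1 x2 < η.1 ∧ Metric.infDist x1 U < ε.1 ∧ v = φ1 x1 + φ2 x2}

/-! Requiring `x2 ∈ V` or `V` closed can only raise the value, since it shrinks the sets over
which the infima are taken. Conversely, if `V` is essentially interior with radius `ρ`, its closed
`δ`-thickening `W` with `δ < ρ` is again essentially interior and closed, and for `η ≤ δ` every
pair `x1 ∈ V`, `d(x1, x2) < η` lies in `W × W`; so `Λ°_W` is bounded by the value of `V` with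
`x2` free. The four infima are therefore squeezed together. -/

section

variable {X : Type*} [MetricSpace X]

def lambdaCircLeft (φ1 φ2 : X → EReal) (V : Set X) : EReal :=
  ⨆ η : {η : ℝ // 0 < η},
    sInf {v : EReal | ∃ x1 ∈ V, ∃ x2 : X, dist x1 x2 < η.1 ∧ v = φ1 x1 + φ2 x2}

lemma lambdaCircLeft_le_lambdaCirc (φ1 φ2 : X → EReal) (V : Set X) :
    lambdaCircLeft φ1 φ2 V ≤ lambdaCirc φ1 φ2 V := by
  refine iSup_mono fun η => sInf_le_sInf ?_
  rintro v ⟨x1, hx1, x2, -, hd, rfl⟩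
  exact ⟨x1, hx1, x2, hd, rfl⟩

lemma EssInt.exists_cthickening {U V : Set X} (hV : EssInt U V) :
    ∃ δ > 0, EssInt U (cthickening δ V) := by
  obtain ⟨ρ, hρ, hball⟩ := hV
  refine ⟨ρ / 4, by positivity, ρ / 2, by positivity, fun w hw => ?_⟩
  obtain ⟨v, hv, hwv⟩ := mem_thickening_iff.1 <|
    cthickening_subset_thickening' (δ₂ := ρ / 2) (by positivity) (by linarith) V hw
  refine (ball_subset_ball' ?_).trans (hball v hv)
  linarith

lemma lambdaCirc_cthickening_le_lambdaCircLeft (φ1 φ2 : X → EReal) (V : Set X) {δ : ℝ}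
    (hδ : 0 < δ) : lambdaCirc φ1 φ2 (cthickening δ V) ≤ lambdaCircLeft φ1 φ2 V := by
  refine iSup_le fun η => le_iSup_of_le ⟨min η.1 δ, lt_min η.2 hδ⟩ (sInf_le_sInf ?_)
  rintro v ⟨x1, hx1, x2, hd, rfl⟩
  have hx2 : x2 ∈ cthickening δ V := thickening_subset_cthickening δ V <|
    mem_thickening_iff.2 ⟨x1, hx1, by rw [dist_comm]; exact hd.trans_le (min_le_right _ _)⟩
  exact ⟨x1, self_subset_cthickening V hx1, x2, hx2, hd.trans_le (min_le_left _ _), rfl⟩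

lemma iInf_essInt_le_iInf_essInt_isClosed {α : Type*} [CompleteLattice α] (U : Set X)
    (f : Set X → α) :
    ⨅ V : {V : Set X // EssInt U V}, f V.1 ≤
      ⨅ V : {V : Set X // EssInt U V ∧ IsClosed V}, f V.1 :=
  le_iInf fun V => iInf_le_of_le ⟨V.1, V.2.1⟩ le_rfl

lemma iInf_essInt_isClosed_lambdaCirc_le (φ1 φ2 : X → EReal) (U : Set X) :
    ⨅ V : {V : Set X // EssInt U V ∧ IsClosed V}, lambdaCirc φ1 φ2 V.1 ≤
      ⨅ V : {V : Set X // EssInt U V}, lambdaCircLeft φ1 φ2 V.1 := by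
  refine le_iInf fun V => ?_
  obtain ⟨δ, hδ, hW⟩ := V.2.exists_cthickening
  exact (iInf_le _ ⟨cthickening δ V.1, hW, isClosed_cthickening⟩).trans
    (lambdaCirc_cthickening_le_lambdaCircLeft φ1 φ2 V.1 hδ)

end

theorem stmt3_general {X : Type*} [MetricSpace X] (φ1 φ2 : X → EReal)
    (U : Set X) :
    (lambdaDag φ1 φ2 U =
      ⨅ V : {V : Set X // EssInt U V}, ⨆ η : {η : ℝ // 0 < η},
        sInf {v : EReal | ∃ x1 ∈ V.1, ∃ x2 : X,
          dist x1 x2 < η.1 ∧ v = φ1 x1 + φ2 x2}) ∧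
    (lambdaDag φ1 φ2 U =
      ⨅ V : {V : Set X // EssInt U V ∧ IsClosed V}, lambdaCirc φ1 φ2 V.1) ∧
    (lambdaDag φ1 φ2 U =
      ⨅ V : {V : Set X // EssInt U V ∧ IsClosed V}, ⨆ η : {η : ℝ // 0 < η},
        sInf {v : EReal | ∃ x1 ∈ V.1, ∃ x2 : X,
          dist x1 x2 < η.1 ∧ v = φ1 x1 + φ2 x2}) := by
  have hleft_le_dag := iInf_mono (ι := {V : Set X // EssInt U V})
    fun V => lambdaCircLeft_le_lambdaCirc φ1 φ2 V.1
  have hclosedLeft_le_closed := iInf_mono (ι := {V : Set X // EssInt U V ∧ IsClosed V})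
    fun V => lambdaCircLeft_le_lambdaCirc φ1 φ2 V.1
  have hdag_le_closed := iInf_essInt_le_iInf_essInt_isClosed U (lambdaCirc φ1 φ2)
  have hleft_le_closedLeft := iInf_essInt_le_iInf_essInt_isClosed U (lambdaCircLeft φ1 φ2)
  have hclosed_le_left := iInf_essInt_isClosed_lambdaCirc_le φ1 φ2 U
  exact ⟨le_antisymm (hdag_le_closed.trans hclosed_le_left) hleft_le_dag,
    le_antisymm hdag_le_closed (hclosed_le_left.trans hleft_le_dag),
    le_antisymm (hdag_le_closed.trans (hclosed_le_left.trans hleft_le_closedLeft))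
      (hclosedLeft_le_closed.trans (hclosed_le_left.trans hleft_le_dag))⟩

/-- Equivalent representations of the quasiuniform infimum `Λ†_U(φ1,φ2)`. -/
theorem stmt3 {X : Type*} [MetricSpace X] (φ1 φ2 : X → EReal)
    (hbot1 : ∀ x, φ1 x ≠ ⊥) (hbot2 : ∀ x, φ2 x ≠ ⊥) (U : Set X)
    (hne : ∃ x ∈ U, φ1 x < ⊤ ∧ φ2 x < ⊤) :
    (lambdaDag φ1 φ2 U =
      ⨅ V : {V : Set X // EssInt U V}, ⨆ η : {η : ℝ // 0 < η},
        sInf {v : EReal | ∃ x1 ∈ V.1, ∃ x2 : X,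
          dist x1 x2 < η.1 ∧ v = φ1 x1 + φ2 x2}) ∧
    (lambdaDag φ1 φ2 U =
      ⨅ V : {V : Set X // EssInt U V ∧ IsClosed V}, lambdaCirc φ1 φ2 V.1) ∧
    (lambdaDag φ1 φ2 U =
      ⨅ V : {V : Set X // EssInt U V ∧ IsClosed V}, ⨆ η : {η : ℝ // 0 < η},
        sInf {v : EReal | ∃ x1 ∈ V.1, ∃ x2 : X,
          dist x1 x2 < η.1 ∧ v = φ1 x1 + φ2 x2}) :=
  stmt3_general φ1 φ2 U
end
end

section
/- If inf_U (φ1+φ2) > −∞ or Λ°_U(φ1,φ2) > −∞, then inf_U (φ1+φ2) − Λ°_U(φ1,φ2) ≤ Θ°_U(φ1,φ2). Similarly, if inf_U (φ1+φ2) > −∞ or Λ†_U(φ1,φ2) > −∞, then inf_U (φ1+φ2) − Λ†_U(φ1,φ2) ≤ Θ†_U(φ1,φ2). -/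
open Metric Set Filter

noncomputable section

/-! The whole argument is one pointwise estimate: if `φ1 x1` and `φ2 x2` are finite, then for
every `x ∈ U` the third entry of the `max` defining `(φ1 ♦ φ2)_U (x1, x2)` is at least
`inf_U (φ1 + φ2) - (φ1 x1 + φ2 x2)`. Pairs where `φ1 x1 + φ2 x2 = +∞` contribute `-∞` on the left.
In `EReal`, `a - b ≤ c ↔ a - c ≤ b` holds without exception, so `m - inf_i b_i ≤ c` as soon as
every `m - b_i ≤ c`; this carries the estimate through the infimum over close pairs, the
supremum over `η` and, for `Λ†`, the infimum over essentially interior subsets. -/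

namespace EReal

theorem sub_le_comm {a b c : EReal} : a - b ≤ c ↔ a - c ≤ b := by
  induction a <;> induction b <;> induction c <;> simp [← coe_sub, add_comm]

theorem sub_iInf_le_iff {ι : Sort*} {a c : EReal} {f : ι → EReal} :
    a - ⨅ i, f i ≤ c ↔ ∀ i, a - f i ≤ c := by
  simp only [sub_le_comm (b := ⨅ i, f i), le_iInf_iff, sub_le_comm (c := c)]

theorem sub_sInf_le_iff {a c : EReal} {s : Set EReal} :
    a - sInf s ≤ c ↔ ∀ b ∈ s, a - b ≤ c := by
  simp only [sInf_eq_iInf, sub_iInf_le_iff]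

end EReal

def thetaCircIn {X : Type*} [MetricSpace X] (φ1 φ2 : X → EReal) (V W : Set X) : EReal :=
  ⨅ η : {η : ℝ // 0 < η},
    sSup (insert (0 : EReal)
      {v : EReal | ∃ x1 x2 : X, φ1 x1 < ⊤ ∧ x1 ∈ V ∧ φ2 x2 < ⊤ ∧ x2 ∈ V ∧
        dist x1 x2 < η.1 ∧ v = diamond φ1 φ2 W x1 x2})

section

variable {X : Type*} [MetricSpace X] {φ1 φ2 : X → EReal}

theorem thetaCirc_eq_thetaCircIn (U : Set X) : thetaCirc φ1 φ2 U = thetaCircIn φ1 φ2 U U := rfl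

theorem thetaDag_eq_iSup_thetaCircIn (U : Set X) :
    thetaDag φ1 φ2 U = ⨆ V : {V : Set X // EssInt U V}, thetaCircIn φ1 φ2 V.1 U := rfl

theorem infSum_sub_add_le_diamond (W : Set X) {x1 x2 : X} {r1 r2 : ℝ}
    (h1 : φ1 x1 = r1) (h2 : φ2 x2 = r2) :
    infSum φ1 φ2 W - (φ1 x1 + φ2 x2) ≤ diamond φ1 φ2 W x1 x2 := by
  refine le_sInf ?_
  rintro _ ⟨x, hx, rfl⟩
  refine le_max_of_le_right ?_
  have sub_add_coe : ∀ s : EReal, s - ((r1 : EReal) + r2) = s - r1 - r2 := by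
    intro s
    induction s <;> norm_cast
    ring
  rw [h1, h2, sub_add_coe]
  exact EReal.sub_le_sub (EReal.sub_le_sub (sInf_le ⟨x, hx, rfl⟩) le_rfl) le_rfl

theorem infSum_sub_lambdaCirc_le (hbot1 : ∀ x, φ1 x ≠ ⊥) (hbot2 : ∀ x, φ2 x ≠ ⊥)
    (U V : Set X) : infSum φ1 φ2 U - lambdaCirc φ1 φ2 V ≤ thetaCircIn φ1 φ2 V U := by
  refine le_iInf fun η => (EReal.sub_le_sub le_rfl (le_iSup _ η)).trans ?_
  rw [EReal.sub_sInf_le_iff]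
  rintro _ ⟨x1, hx1, x2, hx2, hd, rfl⟩
  rcases eq_or_ne (φ1 x1) ⊤ with h1 | h1
  · simp [h1, EReal.top_add_of_ne_bot (hbot2 x2)]
  rcases eq_or_ne (φ2 x2) ⊤ with h2 | h2
  · simp [h2, EReal.add_top_of_ne_bot (hbot1 x1)]
  have h_le_diamond := infSum_sub_add_le_diamond U (EReal.coe_toReal h1 (hbot1 x1)).symm
    (EReal.coe_toReal h2 (hbot2 x2)).symm
  exact h_le_diamond.trans
    (le_sSup (mem_insert_of_mem _ ⟨x1, x2, h1.lt_top, hx1, h2.lt_top, hx2, hd, rfl⟩))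

end

theorem stmt5_general {X : Type*} [MetricSpace X] (φ1 φ2 : X → EReal)
    (hbot1 : ∀ x, φ1 x ≠ ⊥) (hbot2 : ∀ x, φ2 x ≠ ⊥) (U : Set X) :
    ((⊥ < infSum φ1 φ2 U ∨ ⊥ < lambdaCirc φ1 φ2 U) →
      infSum φ1 φ2 U - lambdaCirc φ1 φ2 U ≤ thetaCirc φ1 φ2 U) ∧
    ((⊥ < infSum φ1 φ2 U ∨ ⊥ < lambdaDag φ1 φ2 U) →
      infSum φ1 φ2 U - lambdaDag φ1 φ2 U ≤ thetaDag φ1 φ2 U) := by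
  constructor
  · intro _
    rw [thetaCirc_eq_thetaCircIn]
    exact infSum_sub_lambdaCirc_le hbot1 hbot2 U U
  · intro _
    rw [lambdaDag, EReal.sub_iInf_le_iff, thetaDag_eq_iSup_thetaCircIn]
    exact fun V => (infSum_sub_lambdaCirc_le hbot1 hbot2 U V.1).trans (le_iSup_of_le V le_rfl)

/-- `inf_U (φ1+φ2) − Λ°_U ≤ Θ°_U` and `inf_U (φ1+φ2) − Λ†_U ≤ Θ†_U`, provided the
left-hand sides are well defined. -/
theorem stmt5 {X : Type*} [MetricSpace X] (φ1 φ2 : X → EReal)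
    (hbot1 : ∀ x, φ1 x ≠ ⊥) (hbot2 : ∀ x, φ2 x ≠ ⊥) (U : Set X)
    (hne : ∃ x ∈ U, φ1 x < ⊤ ∧ φ2 x < ⊤) :
    ((⊥ < infSum φ1 φ2 U ∨ ⊥ < lambdaCirc φ1 φ2 U) →
      infSum φ1 φ2 U - lambdaCirc φ1 φ2 U ≤ thetaCirc φ1 φ2 U) ∧
    ((⊥ < infSum φ1 φ2 U ∨ ⊥ < lambdaDag φ1 φ2 U) →
      infSum φ1 φ2 U - lambdaDag φ1 φ2 U ≤ thetaDag φ1 φ2 U) :=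
  stmt5_general φ1 φ2 hbot1 hbot2 U
end
end

section
/- Θ†_U(φ1,φ2) = 0 if and only if Θ†_{U,X}(φ1,φ2) = 0, where Θ†_{U,X}(φ1,φ2) := sup_{V∈EI(U)} inf_{η>0} sup{ (φ1♦φ2)_X(x1,x2) : x1 ∈ dom φ1 ∩ V, x2 ∈ dom φ2 ∩ V, d(x1,x2) < η } is the quantity obtained from Θ†_U by replacing (φ1♦φ2)_U with (φ1♦φ2)_X (the infimum in the ♦-expression taken over all of X). -/
open Metric Set Filter

noncomputable section

/-!
Enlarging the set over which `♦` takes its infimum can only decrease it, so `Θ†_{U,X} ≤ Θ†_U`,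
and both are nonnegative (take `V = ∅`). Conversely, if `V` is essentially interior to `U` with radius `ρ` and
`(φ1♦φ2)_X(x1,x2) < c ≤ ρ`, then a point `x` witnessing this satisfies `d(x,x1) < ρ`, hence lies
in `U`, so `(φ1♦φ2)_U(x1,x2) < c` as well. Thus the inner infima over `η` agree for `V` as soon as
the one over `X` is below `ρ`, in particular when it vanishes.
-/

section

variable {X : Type*} [MetricSpace X] (φ1 φ2 : X → EReal)

def diamondSup (V W : Set X) (η : ℝ) : EReal :=
  sSup (insert (0 : EReal)
    {v : EReal | ∃ x1 x2 : X, φ1 x1 < ⊤ ∧ x1 ∈ V ∧ φ2 x2 < ⊤ ∧ x2 ∈ V ∧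
      dist x1 x2 < η ∧ v = diamond φ1 φ2 W x1 x2})

theorem thetaDagW_eq_iSup_iInf_diamondSup (U W : Set X) :
    thetaDagW φ1 φ2 U W =
      ⨆ V : {V : Set X // EssInt U V}, ⨅ η : {η : ℝ // 0 < η}, diamondSup φ1 φ2 V.1 W η.1 :=
  rfl

variable {φ1 φ2}

theorem diamond_anti {W W' : Set X} (h : W ⊆ W') (x1 x2 : X) :
    diamond φ1 φ2 W' x1 x2 ≤ diamond φ1 φ2 W x1 x2 := by
  apply sInf_le_sInf
  rintro v ⟨x, hx, rfl⟩
  exact ⟨x, h hx, rfl⟩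

theorem diamond_lt_of_ball_subset {U : Set X} {x1 x2 : X} {ρ : ℝ} {c : EReal}
    (hU : ball x1 ρ ⊆ U) (hc : c ≤ ρ) (h : diamond φ1 φ2 univ x1 x2 < c) :
    diamond φ1 φ2 U x1 x2 < c := by
  obtain ⟨_, ⟨x, -, rfl⟩, hx⟩ := sInf_lt_iff.1 h
  have hdist : dist x x1 < ρ := by
    have : ((dist x x1 : ℝ) : EReal) < ρ :=
      ((le_max_left _ _).trans (le_max_left _ _)).trans_lt (hx.trans_le hc)
    exact_mod_cast this
  have hxU : x ∈ U := hU (mem_ball.2 hdist)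
  refine lt_of_le_of_lt ?_ hx
  exact sInf_le ⟨x, hxU, rfl⟩

theorem zero_le_diamondSup (V W : Set X) (η : ℝ) : 0 ≤ diamondSup φ1 φ2 V W η :=
  le_sSup (mem_insert _ _)

theorem diamond_le_diamondSup {V : Set X} (W : Set X) {x1 x2 : X} {η : ℝ}
    (h1 : φ1 x1 < ⊤) (hx1 : x1 ∈ V) (h2 : φ2 x2 < ⊤) (hx2 : x2 ∈ V) (hd : dist x1 x2 < η) :
    diamond φ1 φ2 W x1 x2 ≤ diamondSup φ1 φ2 V W η :=
  le_sSup (mem_insert_of_mem _ ⟨x1, x2, h1, hx1, h2, hx2, hd, rfl⟩)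

theorem diamondSup_anti {V W W' : Set X} (h : W ⊆ W') (η : ℝ) :
    diamondSup φ1 φ2 V W' η ≤ diamondSup φ1 φ2 V W η := by
  refine sSup_le ?_
  rintro v (rfl | ⟨x1, x2, h1, hx1, h2, hx2, hd, rfl⟩)
  · exact zero_le_diamondSup _ _ _
  · exact (diamond_anti h x1 x2).trans (diamond_le_diamondSup W h1 hx1 h2 hx2 hd)

theorem diamondSup_le_of_ball_subset {U V : Set X} {ρ : ℝ} {c : EReal} {η : ℝ}
    (hV : ∀ v ∈ V, ball v ρ ⊆ U) (hc0 : 0 ≤ c) (hc : c ≤ ρ)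
    (h : diamondSup φ1 φ2 V univ η < c) : diamondSup φ1 φ2 V U η ≤ c := by
  refine sSup_le ?_
  rintro v (rfl | ⟨x1, x2, h1, hx1, h2, hx2, hd, rfl⟩)
  · exact hc0
  · exact (diamond_lt_of_ball_subset (hV x1 hx1) hc
      ((diamond_le_diamondSup univ h1 hx1 h2 hx2 hd).trans_lt h)).le

theorem iInf_diamondSup_le_of_lt {U V : Set X} {ρ : ℝ} (hV : ∀ v ∈ V, ball v ρ ⊆ U)
    (hlt : ⨅ η : {η : ℝ // 0 < η}, diamondSup φ1 φ2 V univ η.1 < ρ) :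
    ⨅ η : {η : ℝ // 0 < η}, diamondSup φ1 φ2 V U η.1 ≤
      ⨅ η : {η : ℝ // 0 < η}, diamondSup φ1 φ2 V univ η.1 := by
  refine le_of_forall_gt_imp_ge_of_dense fun c hc => ?_
  obtain ⟨η, hη⟩ := iInf_lt_iff.1 (lt_min hc hlt)
  have hc0 : 0 ≤ min c ρ := (zero_le_diamondSup _ _ _).trans hη.le
  calc ⨅ η : {η : ℝ // 0 < η}, diamondSup φ1 φ2 V U η.1
      ≤ diamondSup φ1 φ2 V U η.1 := iInf_le _ η
    _ ≤ min c ρ := diamondSup_le_of_ball_subset hV hc0 (min_le_right _ _) hη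
    _ ≤ c := min_le_left _ _

theorem zero_le_thetaDagW (U W : Set X) : 0 ≤ thetaDagW φ1 φ2 U W := by
  have hV0 : EssInt U (∅ : Set X) := ⟨1, one_pos, fun v hv => absurd hv (notMem_empty v)⟩
  rw [thetaDagW_eq_iSup_iInf_diamondSup]
  exact (le_iInf fun η => zero_le_diamondSup _ _ _).trans (le_iSup_of_le ⟨∅, hV0⟩ le_rfl)

theorem thetaDagW_anti (U : Set X) {W W' : Set X} (h : W ⊆ W') :
    thetaDagW φ1 φ2 U W' ≤ thetaDagW φ1 φ2 U W :=
  iSup_mono fun _ => iInf_mono fun η => diamondSup_anti h η.1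

theorem thetaDag_le_of_thetaDagW_univ_eq_zero {U : Set X}
    (h : thetaDagW φ1 φ2 U univ = 0) : thetaDag φ1 φ2 U ≤ 0 := by
  rw [thetaDag, thetaDagW_eq_iSup_iInf_diamondSup]
  refine iSup_le fun V => ?_
  obtain ⟨ρ, hρ, hV⟩ := V.2
  have hle : ⨅ η : {η : ℝ // 0 < η}, diamondSup φ1 φ2 V.1 univ η.1 ≤ 0 :=
    h ▸ le_iSup (fun V : {V : Set X // EssInt U V} =>
      ⨅ η : {η : ℝ // 0 < η}, diamondSup φ1 φ2 V.1 univ η.1) V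
  exact (iInf_diamondSup_le_of_lt hV (hle.trans_lt (by exact_mod_cast hρ))).trans hle

end

theorem stmt6_general {X : Type*} [MetricSpace X] (φ1 φ2 : X → EReal) (U : Set X) :
    thetaDag φ1 φ2 U = 0 ↔ thetaDagW φ1 φ2 U Set.univ = 0 := by
  constructor
  · intro h
    exact le_antisymm (h ▸ thetaDagW_anti U (subset_univ U)) (zero_le_thetaDagW U univ)
  · intro h
    exact le_antisymm (thetaDag_le_of_thetaDagW_univ_eq_zero h) (zero_le_thetaDagW U U)

/-- `Θ†_U(φ1,φ2) = 0` iff `Θ†_{U,X}(φ1,φ2) = 0`. -/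
theorem stmt6 {X : Type*} [MetricSpace X] (φ1 φ2 : X → EReal)
    (hbot1 : ∀ x, φ1 x ≠ ⊥) (hbot2 : ∀ x, φ2 x ≠ ⊥) (U : Set X)
    (hne : ∃ x ∈ U, φ1 x < ⊤ ∧ φ2 x < ⊤) :
    thetaDag φ1 φ2 U = 0 ↔ thetaDagW φ1 φ2 U Set.univ = 0 :=
  stmt6_general φ1 φ2 U
end
end

section
/- The pair (φ1,φ2) is firmly uniformly lower semicontinuous on U (i.e. Θ°_U(φ1,φ2) = 0) if and only if for every pair of sequences {x_{1k}} ⊂ dom φ1 ∩ U, {x_{2k}} ⊂ dom φ2 ∩ U with d(x_{1k}, x_{2k}) → 0 as k → +∞, there exists a sequence {x_k} ⊂ U such that d(x_k, x_{1k}) → 0, d(x_k, x_{2k}) → 0, and limsup_{k→+∞} ((φ1+φ2)(x_k) − φ1(x_{1k}) − φ2(x_{2k})) ≤ 0. -/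
open Metric Set Filter

noncomputable section

/-!
`Θ°_U(φ1,φ2) = 0` says that `(φ1♦φ2)_U(x1,x2)` is uniformly small on admissible pairs with
`d(x1,x2)` small, which by the usual sequential criterion means that
`limsup_k (φ1♦φ2)_U(x1k,x2k) ≤ 0` along all admissible sequences with `d(x1k,x2k) → 0`.
For fixed sequences this is equivalent to the existence of `xk`: such `xk` bound `♦` from above,
and conversely points realising `(φ1♦φ2)_U(x1k,x2k)` up to `1/(k+1)` form such a sequence.
-/

open Topology

theorem tendsto_nhds_iff_limsup_le_of_forall_le {α β : Type*} [CompleteLinearOrder β]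
    [TopologicalSpace β] [OrderTopology β] {f : Filter α} {u : α → β} {a : β}
    (h : ∀ x, a ≤ u x) : Tendsto u f (𝓝 a) ↔ limsup u f ≤ a :=
  ⟨fun hu => (limsup_le_iff).2 fun _ hb => hu.eventually_lt_const hb,
    tendsto_of_le_liminf_of_limsup_le (le_liminf_of_le (by isBoundedDefault) (.of_forall h))⟩

theorem forall_exists_dist_lt_imp_lt_iff_forall_limsup_le {α β : Type*} [PseudoMetricSpace α]
    [CompleteLinearOrder β] (p q : α → Prop) (f : α → α → β) (c : β) :
    (∀ ε > c, ∃ η > (0 : ℝ), ∀ a b, p a → q b → dist a b < η → f a b < ε) ↔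
      ∀ a b : ℕ → α, (∀ k, p (a k)) → (∀ k, q (b k)) →
        Tendsto (fun k => dist (a k) (b k)) atTop (𝓝 0) →
        limsup (fun k => f (a k) (b k)) atTop ≤ c := by
  constructor
  · intro h a b ha hb hab
    refine (limsup_le_iff).2 fun ε hε => ?_
    obtain ⟨η, hη, hf⟩ := h ε hε
    exact (hab.eventually_lt_const hη).mono fun k hk => hf _ _ (ha k) (hb k) hk
  · intro h ε hε
    by_contra! hbad
    choose a b ha hb hab hf using fun k : ℕ => hbad (1 / (k + 1)) Nat.one_div_pos_of_nat
    have hab_tendsto : Tendsto (fun k => dist (a k) (b k)) atTop (𝓝 0) :=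
      squeeze_zero (fun _ => dist_nonneg) (fun k => (hab k).le)
        tendsto_one_div_add_atTop_nhds_zero_nat
    obtain ⟨k, hk⟩ :=
      (eventually_lt_of_limsup_lt ((h a b ha hb hab_tendsto).trans_lt hε)).exists
    exact (hf k).not_gt hk

section Diamond

variable {X : Type*} [MetricSpace X] (φ1 φ2 : X → EReal) (W : Set X)

theorem diamond_nonneg (x1 x2 : X) : 0 ≤ diamond φ1 φ2 W x1 x2 :=
  le_sInf fun _ ⟨_, _, hv⟩ =>
    hv ▸ le_max_of_le_left (le_max_of_le_left (EReal.coe_nonneg.2 dist_nonneg))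

theorem diamond_lt_iff {x1 x2 : X} {c : EReal} :
    diamond φ1 φ2 W x1 x2 < c ↔ ∃ x ∈ W, ((dist x x1 : ℝ) : EReal) < c ∧
      ((dist x x2 : ℝ) : EReal) < c ∧ φ1 x + φ2 x - φ1 x1 - φ2 x2 < c := by
  rw [diamond, sInf_lt_iff]
  constructor
  · rintro ⟨_, ⟨x, hx, rfl⟩, hlt⟩
    rw [max_lt_iff, max_lt_iff] at hlt
    exact ⟨x, hx, hlt.1.1, hlt.1.2, hlt.2⟩
  · rintro ⟨x, hx, h1, h2, h3⟩
    exact ⟨_, ⟨x, hx, rfl⟩, max_lt (max_lt h1 h2) h3⟩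

theorem exists_le_diamond_add {x1 x2 : X} (hW : W.Nonempty) {δ : ℝ} (hδ : 0 < δ) :
    ∃ x ∈ W, ((dist x x1 : ℝ) : EReal) ≤ diamond φ1 φ2 W x1 x2 + δ ∧
      ((dist x x2 : ℝ) : EReal) ≤ diamond φ1 φ2 W x1 x2 + δ ∧
      φ1 x + φ2 x - φ1 x1 - φ2 x2 ≤ diamond φ1 φ2 W x1 x2 + δ := by
  by_cases htop : diamond φ1 φ2 W x1 x2 = ⊤
  · obtain ⟨x, hx⟩ := hW
    simp only [htop, EReal.top_add_coe, le_top, and_self]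
    exact ⟨x, hx, trivial⟩
  · have hlt : diamond φ1 φ2 W x1 x2 < diamond φ1 φ2 W x1 x2 + δ := by
      lift diamond φ1 φ2 W x1 x2 to ℝ
        using ⟨htop, ne_bot_of_le_ne_bot EReal.zero_ne_bot (diamond_nonneg ..)⟩ with r
      exact_mod_cast lt_add_of_pos_right r hδ
    obtain ⟨x, hx, h1, h2, h3⟩ := (diamond_lt_iff φ1 φ2 W).1 hlt
    exact ⟨x, hx, h1.le, h2.le, h3.le⟩

variable {φ1 φ2 W}

theorem limsup_diamond_le_zero_of_tendsto {x y1 y2 : ℕ → X} (hx : ∀ k, x k ∈ W)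
    (h1 : Tendsto (fun k => dist (x k) (y1 k)) atTop (𝓝 0))
    (h2 : Tendsto (fun k => dist (x k) (y2 k)) atTop (𝓝 0))
    (hgap : limsup (fun k => φ1 (x k) + φ2 (x k) - φ1 (y1 k) - φ2 (y2 k)) atTop ≤ 0) :
    limsup (fun k => diamond φ1 φ2 W (y1 k) (y2 k)) atTop ≤ 0 := by
  refine (limsup_le_iff).2 fun ε hε => ?_
  have h1' := (EReal.tendsto_coe.2 h1).eventually_lt_const (EReal.coe_zero ▸ hε)
  have h2' := (EReal.tendsto_coe.2 h2).eventually_lt_const (EReal.coe_zero ▸ hε)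
  filter_upwards [h1', h2', (limsup_le_iff).1 hgap ε hε] with k hk1 hk2 hk3
  exact (diamond_lt_iff φ1 φ2 W).2 ⟨x k, hx k, hk1, hk2, hk3⟩

theorem exists_tendsto_of_limsup_diamond_le_zero {y1 y2 : ℕ → X} (hy1 : ∀ k, y1 k ∈ W)
    (hD : limsup (fun k => diamond φ1 φ2 W (y1 k) (y2 k)) atTop ≤ 0) :
    ∃ x : ℕ → X, (∀ k, x k ∈ W) ∧
      Tendsto (fun k => dist (x k) (y1 k)) atTop (𝓝 0) ∧
      Tendsto (fun k => dist (x k) (y2 k)) atTop (𝓝 0) ∧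
      limsup (fun k => φ1 (x k) + φ2 (x k) - φ1 (y1 k) - φ2 (y2 k)) atTop ≤ 0 := by
  set B : ℕ → EReal := fun k => diamond φ1 φ2 W (y1 k) (y2 k) + (1 / (k + 1) : ℝ)
  choose x hx hx1 hx2 hgap using fun k : ℕ =>
    exists_le_diamond_add φ1 φ2 W (x1 := y1 k) (x2 := y2 k) ⟨y1 k, hy1 k⟩
      Nat.one_div_pos_of_nat
  have hB : Tendsto B atTop (𝓝 0) := by
    have hDt := (tendsto_nhds_iff_limsup_le_of_forall_le fun _ => diamond_nonneg ..).2 hD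
    have hδ : Tendsto (fun k : ℕ => ((1 / (k + 1) : ℝ) : EReal)) atTop (𝓝 0) :=
      EReal.coe_zero ▸ EReal.tendsto_coe.2 tendsto_one_div_add_atTop_nhds_zero_nat
    simpa [B, Function.comp_def] using
      (EReal.continuousAt_add (p := (0, 0)) (by simp) (by simp)).tendsto.comp
        (hDt.prodMk_nhds hδ)
  have hsqueeze : ∀ u : ℕ → ℝ, (∀ k, 0 ≤ u k) → (∀ k, (u k : EReal) ≤ B k) →
      Tendsto u atTop (𝓝 0) := fun u hu huB =>
    EReal.tendsto_coe.1 <| tendsto_of_tendsto_of_tendsto_of_le_of_le tendsto_const_nhds hB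
      (fun k => EReal.coe_nonneg.2 (hu k)) huB
  exact ⟨x, hx, hsqueeze _ (fun _ => dist_nonneg) hx1, hsqueeze _ (fun _ => dist_nonneg) hx2,
    (limsup_le_limsup (.of_forall hgap)).trans hB.limsup_eq.le⟩

theorem exists_tendsto_iff_limsup_diamond_le_zero {y1 y2 : ℕ → X} (hy1 : ∀ k, y1 k ∈ W) :
    (∃ x : ℕ → X, (∀ k, x k ∈ W) ∧
      Tendsto (fun k => dist (x k) (y1 k)) atTop (𝓝 0) ∧
      Tendsto (fun k => dist (x k) (y2 k)) atTop (𝓝 0) ∧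
      limsup (fun k => φ1 (x k) + φ2 (x k) - φ1 (y1 k) - φ2 (y2 k)) atTop ≤ 0) ↔
      limsup (fun k => diamond φ1 φ2 W (y1 k) (y2 k)) atTop ≤ 0 :=
  ⟨fun ⟨_, hx, h1, h2, hgap⟩ => limsup_diamond_le_zero_of_tendsto hx h1 h2 hgap,
    exists_tendsto_of_limsup_diamond_le_zero hy1⟩

end Diamond

theorem thetaCirc_eq_zero_iff {X : Type*} [MetricSpace X] (φ1 φ2 : X → EReal) (U : Set X) :
    thetaCirc φ1 φ2 U = 0 ↔ ∀ ε > 0, ∃ η > (0 : ℝ), ∀ y1 y2,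
      (φ1 y1 < ⊤ ∧ y1 ∈ U) → (φ2 y2 < ⊤ ∧ y2 ∈ U) → dist y1 y2 < η →
        diamond φ1 φ2 U y1 y2 < ε := by
  constructor
  · intro h ε hε
    obtain ⟨⟨η, hη⟩, hlt⟩ := iInf_lt_iff.1 (h ▸ hε : thetaCirc φ1 φ2 U < ε)
    refine ⟨η, hη, fun y1 y2 h1 h2 hd => lt_of_le_of_lt ?_ hlt⟩
    exact le_sSup (mem_insert_of_mem _ ⟨y1, y2, h1.1, h1.2, h2.1, h2.2, hd, rfl⟩)
  · intro h
    refine le_antisymm (le_of_forall_gt_imp_ge_of_dense fun ε hε => ?_)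
      (le_iInf fun _ => le_sSup (mem_insert _ _))
    obtain ⟨η, hη, hsmall⟩ := h ε hε
    refine (iInf_le _ (⟨η, hη⟩ : {η : ℝ // 0 < η})).trans (sSup_le ?_)
    rintro _ (rfl | ⟨y1, y2, h1, hU1, h2, hU2, hd, rfl⟩)
    · exact hε.le
    · exact (hsmall y1 y2 ⟨h1, hU1⟩ ⟨h2, hU2⟩ hd).le

theorem stmt9_general {X : Type*} [MetricSpace X] (φ1 φ2 : X → EReal)
    (U : Set X) :
    thetaCirc φ1 φ2 U = 0 ↔
      ∀ x1 x2 : ℕ → X,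
        (∀ k, φ1 (x1 k) < ⊤ ∧ x1 k ∈ U) →
        (∀ k, φ2 (x2 k) < ⊤ ∧ x2 k ∈ U) →
        Filter.Tendsto (fun k => dist (x1 k) (x2 k)) Filter.atTop (nhds 0) →
        ∃ x : ℕ → X, (∀ k, x k ∈ U) ∧
          Filter.Tendsto (fun k => dist (x k) (x1 k)) Filter.atTop (nhds 0) ∧
          Filter.Tendsto (fun k => dist (x k) (x2 k)) Filter.atTop (nhds 0) ∧
          Filter.limsup (fun k => φ1 (x k) + φ2 (x k) - φ1 (x1 k) - φ2 (x2 k))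
            Filter.atTop ≤ 0 := by
  rw [thetaCirc_eq_zero_iff, forall_exists_dist_lt_imp_lt_iff_forall_limsup_le]
  refine forall₂_congr fun x1 x2 => forall_congr' fun h1 => forall₂_congr fun _ _ => ?_
  exact (exists_tendsto_iff_limsup_diamond_le_zero fun k => (h1 k).2).symm

/-- Sequential characterization of firm uniform lower semicontinuity. -/
theorem stmt9 {X : Type*} [MetricSpace X] (φ1 φ2 : X → EReal)
    (hbot1 : ∀ x, φ1 x ≠ ⊥) (hbot2 : ∀ x, φ2 x ≠ ⊥) (U : Set X)
    (hne : ∃ x ∈ U, φ1 x < ⊤ ∧ φ2 x < ⊤) :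
    thetaCirc φ1 φ2 U = 0 ↔
      ∀ x1 x2 : ℕ → X,
        (∀ k, φ1 (x1 k) < ⊤ ∧ x1 k ∈ U) →
        (∀ k, φ2 (x2 k) < ⊤ ∧ x2 k ∈ U) →
        Filter.Tendsto (fun k => dist (x1 k) (x2 k)) Filter.atTop (nhds 0) →
        ∃ x : ℕ → X, (∀ k, x k ∈ U) ∧
          Filter.Tendsto (fun k => dist (x k) (x1 k)) Filter.atTop (nhds 0) ∧
          Filter.Tendsto (fun k => dist (x k) (x2 k)) Filter.atTop (nhds 0) ∧
          Filter.limsup (fun k => φ1 (x k) + φ2 (x k) - φ1 (x1 k) - φ2 (x2 k))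
            Filter.atTop ≤ 0 :=
  stmt9_general φ1 φ2 U
end
end

section
/- If φ2 is real-valued and uniformly continuous on U, then the pair (φ1,φ2) is firmly uniformly lower semicontinuous on U, i.e. Θ°_U(φ1,φ2) = 0. -/
/-! Taking `x = x1` in the infimum defining `(φ1 ♦ φ2)_U(x1, x2)` bounds it by
`max {d(x1, x2), φ2(x1) - φ2(x2)}`: the `φ1`-terms cancel (and if `φ1 x1` is infinite,
`EReal` subtraction makes the difference `⊥`). Uniform continuity of `φ2` makes this bound
small whenever `d(x1, x2)` is small, so the infimum over `η` defining `Θ°_U` is `0`. -/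

open Metric Set Filter

noncomputable section

theorem EReal.add_sub_cancel_left_le (x y : EReal) : x + y - x ≤ y :=
  EReal.sub_le_of_le_add (add_comm x y).le

theorem zero_le_thetaCirc {X : Type*} [MetricSpace X] (φ1 φ2 : X → EReal) (U : Set X) :
    0 ≤ thetaCirc φ1 φ2 U :=
  le_iInf fun _ => le_sSup (mem_insert _ _)

theorem diamond_le_of_mem {X : Type*} [MetricSpace X] (φ1 φ2 : X → EReal) {W : Set X}
    {x1 : X} (hx1 : x1 ∈ W) (x2 : X) :
    diamond φ1 φ2 W x1 x2 ≤ max ((dist x1 x2 : ℝ) : EReal) (φ2 x1 - φ2 x2) := by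
  refine sInf_le_of_le ⟨x1, hx1, rfl⟩ (max_le (max_le ?_ (le_max_left _ _)) ?_)
  · rw [dist_self, EReal.coe_zero]
    exact le_max_of_le_left (EReal.coe_nonneg.2 dist_nonneg)
  · exact le_max_of_le_right (EReal.sub_le_sub (EReal.add_sub_cancel_left_le _ _) le_rfl)

theorem thetaCirc_le_of_uniformContinuousOn {X : Type*} [MetricSpace X] (φ1 : X → EReal)
    {φ2 : X → ℝ} {U : Set X} (hφ2 : UniformContinuousOn φ2 U) {ε : ℝ} (hε : 0 < ε) :
    thetaCirc φ1 (fun x => (φ2 x : EReal)) U ≤ ε := by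
  obtain ⟨δ, hδ, hφ2δ⟩ := Metric.uniformContinuousOn_iff.1 hφ2 ε hε
  refine (iInf_le _ ⟨min δ ε, lt_min hδ hε⟩).trans (sSup_le ?_)
  rintro v (rfl | ⟨x1, x2, -, hx1, -, hx2, hdist, rfl⟩)
  · exact_mod_cast hε.le
  · refine (diamond_le_of_mem _ _ hx1 x2).trans (max_le ?_ ?_)
    · exact_mod_cast (hdist.trans_le (min_le_right _ _)).le
    · have hφ2_close := hφ2δ x1 hx1 x2 hx2 (hdist.trans_le (min_le_left _ _))
      exact_mod_cast ((le_abs_self _).trans_lt hφ2_close).le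

theorem stmt12_general {X : Type*} [MetricSpace X] (φ1 : X → EReal)
    (φ2 : X → ℝ) (U : Set X)
    (hφ2 : UniformContinuousOn φ2 U) :
    thetaCirc φ1 (fun x => (φ2 x : EReal)) U = 0 :=
  le_antisymm
    (EReal.le_of_forall_lt_iff_le.1 fun _ hε =>
      thetaCirc_le_of_uniformContinuousOn φ1 hφ2 (by exact_mod_cast hε))
    (zero_le_thetaCirc _ _ _)

/-- If `φ2` is real-valued and uniformly continuous on `U`, then `(φ1,φ2)` is firmly
uniformly lower semicontinuous on `U`. -/
theorem stmt12 {X : Type*} [MetricSpace X] (φ1 : X → EReal)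
    (hbot1 : ∀ x, φ1 x ≠ ⊥) (φ2 : X → ℝ) (U : Set X)
    (hne : ∃ x ∈ U, φ1 x < ⊤)
    (hφ2 : UniformContinuousOn φ2 U) :
    thetaCirc φ1 (fun x => (φ2 x : EReal)) U = 0 :=
  stmt12_general φ1 φ2 U hφ2
end
end

section
/- Suppose φ1 and φ2 are lower semicontinuous on U (i.e. their restrictions to U are lower semicontinuous) and inf_U φ2 > −∞. If the sublevel set {x ∈ U | φ1(x) ≤ c} is compact for every c ∈ ℝ, then the pair (φ1,φ2) is uniformly lower semicontinuous on U, i.e. inf_U (φ1+φ2) ≤ Λ°_U(φ1,φ2). -/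
open Metric Set Filter

noncomputable section

/-! Given a real `b > Λ°_U(φ1,φ2)`, pick `u n, v n ∈ U` with `d(u n, v n) < 1/(n+1)` and
`φ1 (u n) + φ2 (v n) < b`. As `φ2 ≥ m` on `U` for some real `m`, the points `u n` stay in the
compact sublevel set `{φ1 ≤ b - m}`, so a subsequence converges to some `x ∈ U`, and the
corresponding `v n` converge to `x` as well. Lower semicontinuity then gives
`φ1 x + φ2 x ≤ b`. -/

open Topology

namespace EReal

lemma le_coe_sub_of_add_lt {a c : EReal} {b m : ℝ} (h : a + c < b) (hm : (m : EReal) ≤ c) :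
    a ≤ ((b - m : ℝ) : EReal) := by
  rw [coe_sub, le_sub_iff_add_le (.inl (coe_ne_bot m)) (.inl (coe_ne_top m))]
  exact (add_le_add_right hm a).trans h.le

end EReal

lemma add_le_liminf_of_tendsto {α ι : Type*} [TopologicalSpace α] {φ1 φ2 : α → EReal}
    {s : Set α} {x1 x2 : α} {l : Filter ι} {u v : ι → α}
    (h1 : LowerSemicontinuousWithinAt φ1 s x1) (h2 : LowerSemicontinuousWithinAt φ2 s x2)
    (hu : Tendsto u l (𝓝[s] x1)) (hv : Tendsto v l (𝓝[s] x2)) :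
    φ1 x1 + φ2 x2 ≤ liminf (fun i => φ1 (u i) + φ2 (v i)) l :=
  calc φ1 x1 + φ2 x2 ≤ liminf (φ1 ∘ u) l + liminf (φ2 ∘ v) l :=
        add_le_add (h1.le_liminf.trans (liminf_le_liminf_of_le hu))
          (h2.le_liminf.trans (liminf_le_liminf_of_le hv))
    _ ≤ liminf (fun i => φ1 (u i) + φ2 (v i)) l := EReal.le_liminf_add

section

variable {X : Type*} [MetricSpace X] {φ1 φ2 : X → EReal}

lemma infSum_le {U : Set X} {x : X} (hx : x ∈ U) : infSum φ1 φ2 U ≤ φ1 x + φ2 x :=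
  sInf_le ⟨x, hx, rfl⟩

lemma exists_mem_dist_lt_add_lt_of_lambdaCirc_lt {W : Set X} {b : EReal}
    (hb : lambdaCirc φ1 φ2 W < b) {η : ℝ} (hη : 0 < η) :
    ∃ x1 ∈ W, ∃ x2 ∈ W, dist x1 x2 < η ∧ φ1 x1 + φ2 x2 < b := by
  obtain ⟨_, ⟨x1, hx1, x2, hx2, hd, rfl⟩, hlt⟩ :=
    sInf_lt_iff.1 ((le_iSup_of_le (⟨η, hη⟩ : {η : ℝ // 0 < η}) le_rfl).trans_lt hb)
  exact ⟨x1, hx1, x2, hx2, hd, hlt⟩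

lemma exists_add_le_of_tendsto_dist_zero {U K : Set X}
    (hlsc1 : LowerSemicontinuousOn φ1 U) (hlsc2 : LowerSemicontinuousOn φ2 U)
    (hK : IsCompact K) (hKU : K ⊆ U) {u v : ℕ → X} (hu : ∀ n, u n ∈ K) (hv : ∀ n, v n ∈ U)
    (hdist : Tendsto (fun n => dist (u n) (v n)) atTop (𝓝 0)) {b : EReal}
    (hb : ∀ n, φ1 (u n) + φ2 (v n) ≤ b) : ∃ x ∈ U, φ1 x + φ2 x ≤ b := by
  obtain ⟨x, hxK, ψ, hψ, hux⟩ := hK.tendsto_subseq hu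
  have hvx : Tendsto (v ∘ ψ) atTop (𝓝 x) := hux.congr_dist (hdist.comp hψ.tendsto_atTop)
  have hxU := hKU hxK
  refine ⟨x, hxU, ?_⟩
  calc φ1 x + φ2 x ≤ liminf (fun k => φ1 (u (ψ k)) + φ2 (v (ψ k))) atTop :=
        add_le_liminf_of_tendsto (hlsc1 x hxU) (hlsc2 x hxU)
          (tendsto_nhdsWithin_iff.2 ⟨hux, .of_forall fun k => hKU (hu (ψ k))⟩)
          (tendsto_nhdsWithin_iff.2 ⟨hvx, .of_forall fun k => hv (ψ k)⟩)
    _ ≤ b := liminf_le_of_frequently_le' (.of_forall fun k => hb (ψ k))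

end

theorem stmt13_general {X : Type*} [MetricSpace X] (φ1 φ2 : X → EReal)
    (U : Set X)
    (hlsc1 : LowerSemicontinuousOn φ1 U) (hlsc2 : LowerSemicontinuousOn φ2 U)
    (hbound : ⊥ < sInf (φ2 '' U))
    (hcompact : ∀ c : ℝ, IsCompact {x | x ∈ U ∧ φ1 x ≤ (c : EReal)}) :
    infSum φ1 φ2 U ≤ lambdaCirc φ1 φ2 U := by
  obtain ⟨m, -, hm⟩ := EReal.lt_iff_exists_real_btwn.1 hbound
  have hφ2 : ∀ x ∈ U, (m : EReal) ≤ φ2 x := fun x hx => (hm.trans_le (sInf_le ⟨x, hx, rfl⟩)).le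
  refine EReal.le_of_forall_lt_iff_le.1 fun b hb => ?_
  choose u hu v hv hdist hlt using fun n : ℕ =>
    exists_mem_dist_lt_add_lt_of_lambdaCirc_lt hb (Nat.one_div_pos_of_nat (n := n))
  obtain ⟨x, hx, hxb⟩ := exists_add_le_of_tendsto_dist_zero hlsc1 hlsc2 (hcompact (b - m))
    (fun _ h => h.1) (fun n => ⟨hu n, EReal.le_coe_sub_of_add_lt (hlt n) (hφ2 _ (hv n))⟩) hv
    (squeeze_zero (fun _ => dist_nonneg) (fun n => (hdist n).le)
      tendsto_one_div_add_atTop_nhds_zero_nat)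
    (fun n => (hlt n).le)
  exact (infSum_le hx).trans hxb

/-- Compactness of the sublevel sets of `φ1` on `U` guarantees uniform lower
semicontinuity of `(φ1,φ2)` on `U`. -/
theorem stmt13 {X : Type*} [MetricSpace X] (φ1 φ2 : X → EReal)
    (hbot1 : ∀ x, φ1 x ≠ ⊥) (hbot2 : ∀ x, φ2 x ≠ ⊥) (U : Set X)
    (hne : ∃ x ∈ U, φ1 x < ⊤ ∧ φ2 x < ⊤)
    (hlsc1 : LowerSemicontinuousOn φ1 U) (hlsc2 : LowerSemicontinuousOn φ2 U)
    (hbound : ⊥ < sInf (φ2 '' U))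
    (hcompact : ∀ c : ℝ, IsCompact {x | x ∈ U ∧ φ1 x ≤ (c : EReal)}) :
    infSum φ1 φ2 U ≤ lambdaCirc φ1 φ2 U :=
  stmt13_general φ1 φ2 U hlsc1 hlsc2 hbound hcompact
end
end

section
/- Let X be a reflexive Banach space, U ⊂ X convex and bounded, and let φ1, φ2 : X → ℝ ∪ {+∞} be weakly sequentially lower semicontinuous on U, with dom φ1 ∩ dom φ2 ∩ U ≠ ∅. Then the pair (φ1,φ2) is quasiuniformly lower semicontinuous on U, i.e. inf_U (φ1+φ2) ≤ Λ†_U(φ1,φ2). -/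
open Metric Set Filter

noncomputable section

/-!
Fix an essentially interior `V ⊆ U` and `t > Λ°_V(φ1, φ2)`, and pick pairs `x1 k, x2 k ∈ V`
with `‖x1 k - x2 k‖ < 1 / (k + 1)` and `φ1 (x1 k) + φ2 (x2 k) < t`. Since `U` is bounded and `X` is
reflexive, a subsequence of `x1` converges weakly to some `x` (the closed span of the sequence is
separable and reflexive, so its dual is separable and sequential Banach–Alaoglu applies in its
bidual); along it `x2` converges weakly to `x` as well. The `ρ`-interior of `U` is convex and
contains `V`, so by Mazur its closure contains `x`, whence `x ∈ U`. Weak sequential lower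
semicontinuity then gives `φ1 x + φ2 x ≤ t`.
-/

open TopologicalSpace NormedSpace Topology

section Metric

variable {X : Type*} [MetricSpace X]

theorem EssInt.subset {U V : Set X} (hV : EssInt U V) : V ⊆ U :=
  let ⟨_, hρ, hball⟩ := hV
  fun v hv => hball v hv (mem_ball_self hρ)

theorem exists_lt_of_lambdaCirc_lt {φ1 φ2 : X → EReal} {W : Set X} {t : EReal}
    (ht : lambdaCirc φ1 φ2 W < t) {η : ℝ} (hη : 0 < η) :
    ∃ x1 ∈ W, ∃ x2 ∈ W, dist x1 x2 < η ∧ φ1 x1 + φ2 x2 < t := by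
  obtain ⟨_, ⟨x1, hx1, x2, hx2, hd, rfl⟩, hlt⟩ :=
    sInf_lt_iff.mp ((le_iSup _ (⟨η, hη⟩ : {η : ℝ // 0 < η})).trans_lt ht)
  exact ⟨x1, hx1, x2, hx2, hd, hlt⟩

end Metric

section HahnBanach

variable {E : Type*} [NormedAddCommGroup E] [NormedSpace ℝ E]

theorem Submodule.exists_dual_eq_zero_ne_zero (M : Submodule ℝ E) {x : E}
    (hx : x ∉ closure (M : Set E)) :
    ∃ f : StrongDual ℝ E, (∀ m ∈ M, f m = 0) ∧ f x ≠ 0 := by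
  rw [← Submodule.topologicalClosure_coe] at hx
  obtain ⟨f, u, hfM, hux⟩ := geometric_hahn_banach_closed_point
    M.topologicalClosure.convex M.isClosed_topologicalClosure hx
  have hu : 0 < u := by simpa using hfM 0 (zero_mem _)
  refine ⟨f, fun m hm => by_contra fun hfm => ?_, fun h => by linarith [h ▸ hux]⟩
  -- `f` is bounded above on the subspace, so it cannot take the value `2u` there
  have := hfM ((2 * u / f m) • m) (M.le_topologicalClosure (M.smul_mem _ hm))
  rw [map_smul, smul_eq_mul, div_mul_cancel₀ _ hfm] at this
  linarith

theorem separableSpace_of_separableSpace_strongDual [SeparableSpace (StrongDual ℝ E)] :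
    SeparableSpace E := by
  obtain ⟨D, hDc, hDd⟩ := exists_countable_dense (StrongDual ℝ E)
  have half_norm_le (g : StrongDual ℝ E) : ∃ e : E, ‖e‖ ≤ 1 ∧ ‖g‖ / 2 ≤ g e := by
    rcases eq_or_ne g 0 with rfl | hg
    · exact ⟨0, by simp⟩
    obtain ⟨z, hz1, hz2⟩ := g.exists_lt_apply_of_lt_opNorm
      (half_lt_self (norm_pos_iff.2 hg))
    rcases le_or_gt 0 (g z) with h | h
    · exact ⟨z, hz1.le, by rw [Real.norm_eq_abs, abs_of_nonneg h] at hz2; exact hz2.le⟩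
    · refine ⟨-z, by simpa using hz1.le, ?_⟩
      rw [Real.norm_eq_abs, abs_of_neg h] at hz2
      simpa using hz2.le
  choose e he1 he2 using half_norm_le
  set M : Submodule ℝ E := Submodule.span ℝ (e '' D)
  suffices hM : Dense (M : Set E) by
    have := ((hDc.image e).isSeparable.span (R := ℝ)).closure
    rwa [hM.closure_eq, isSeparable_univ_iff] at this
  by_contra hnd
  obtain ⟨x, hx⟩ := not_forall.mp hnd
  obtain ⟨f, hfM, hfx⟩ := M.exists_dual_eq_zero_ne_zero hx
  have hf : 0 < ‖f‖ := norm_pos_iff.2 fun h => hfx (by simp [h])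
  obtain ⟨g, hgD, hfg⟩ := hDd.exists_dist_lt f (by positivity : 0 < ‖f‖ / 4)
  rw [dist_eq_norm] at hfg
  -- `g` nearly attains its norm at `e g`, where `f` vanishes, so `‖g‖ ≤ 2 ‖f - g‖`
  have hge : g (e g) ≤ ‖f - g‖ := by
    have hfe : f (e g) = 0 := hfM _ (Submodule.subset_span ⟨g, hgD, rfl⟩)
    calc g (e g) = (g - f) (e g) := by simp [hfe]
      _ ≤ ‖g - f‖ * ‖e g‖ := (le_abs_self _).trans ((g - f).le_opNorm _)
      _ ≤ ‖f - g‖ := by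
        rw [norm_sub_rev]; exact mul_le_of_le_one_right (norm_nonneg _) (he1 g)
  linarith [he2 g, norm_sub_norm_le f g]

end HahnBanach

section Reflexive

variable {X : Type*} [NormedAddCommGroup X] [NormedSpace ℝ X]

theorem Submodule.surjective_inclusionInDoubleDual
    (hrefl : Function.Surjective (inclusionInDoubleDual ℝ X))
    (Y : Submodule ℝ X) (hY : IsClosed (Y : Set X)) :
    Function.Surjective (inclusionInDoubleDual ℝ Y) := by
  intro ξ
  let R : StrongDual ℝ X →L[ℝ] StrongDual ℝ Y :=
    (ContinuousLinearMap.compL ℝ Y X ℝ).flip Y.subtypeL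
  obtain ⟨x, hx⟩ := hrefl (ξ.comp R)
  have hξ : ∀ f : StrongDual ℝ X, f x = ξ (R f) := fun f => by
    simpa using DFunLike.congr_fun hx f
  have hxY : x ∈ Y := by
    by_contra hxY
    obtain ⟨f, hfY, hfx⟩ := Y.exists_dual_eq_zero_ne_zero (x := x) (by rwa [hY.closure_eq])
    have hRf : R f = 0 := by ext y; exact hfY y y.2
    exact hfx (by rw [hξ, hRf, map_zero])
  refine ⟨⟨x, hxY⟩, ContinuousLinearMap.ext fun g => ?_⟩
  obtain ⟨F, hF, -⟩ := exists_extension_norm_eq Y g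
  have hRF : R F = g := by ext y; exact hF y
  rw [dual_def, ← hF, ← hRF]
  exact hξ F

theorem exists_strictMono_forall_dual_tendsto_of_separableSpace
    [SeparableSpace (StrongDual ℝ X)]
    (hrefl : Function.Surjective (inclusionInDoubleDual ℝ X))
    {a : ℕ → X} {M : ℝ} (hM : ∀ k, ‖a k‖ ≤ M) :
    ∃ x : X, ∃ ψ : ℕ → ℕ, StrictMono ψ ∧
      ∀ f : StrongDual ℝ X, Tendsto (fun k => f (a (ψ k))) atTop (𝓝 (f x)) := by
  let b : ℕ → WeakDual ℝ (StrongDual ℝ X) := fun k =>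
    StrongDual.toWeakDual (inclusionInDoubleDual ℝ X (a k))
  have hb : ∀ k, b k ∈
      WeakDual.toStrongDual ⁻¹' closedBall (0 : StrongDual ℝ (StrongDual ℝ X)) M :=
    fun k => (dist_zero_right (inclusionInDoubleDual ℝ X (a k))).trans_le
      ((double_dual_bound ℝ X _).trans (hM k))
  obtain ⟨Λ, -, ψ, hψ, hΛ⟩ := WeakDual.isSeqCompact_closedBall ℝ _ 0 M hb
  obtain ⟨x, hx⟩ := hrefl (WeakDual.toStrongDual Λ)
  refine ⟨x, ψ, hψ, fun f => ?_⟩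
  have := ((WeakDual.eval_continuous f).tendsto Λ).comp hΛ
  simpa [b, Function.comp_def, ← WeakDual.toStrongDual_apply, ← hx] using this

theorem exists_strictMono_forall_dual_tendsto
    (hrefl : Function.Surjective (inclusionInDoubleDual ℝ X))
    {a : ℕ → X} {M : ℝ} (hM : ∀ k, ‖a k‖ ≤ M) :
    ∃ x : X, ∃ ψ : ℕ → ℕ, StrictMono ψ ∧
      ∀ f : StrongDual ℝ X, Tendsto (fun k => f (a (ψ k))) atTop (𝓝 (f x)) := by
  set Y : Submodule ℝ X := (Submodule.span ℝ (Set.range a)).topologicalClosure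
  have haY : ∀ k, a k ∈ Y :=
    fun k => Submodule.le_topologicalClosure _ (Submodule.subset_span (mem_range_self k))
  have : SeparableSpace Y := by
    have := ((countable_range a).isSeparable.span (R := ℝ)).closure
    rw [← Submodule.topologicalClosure_coe] at this
    exact this.separableSpace
  have hYrefl := Y.surjective_inclusionInDoubleDual hrefl (Submodule.isClosed_topologicalClosure _)
  have : SeparableSpace (StrongDual ℝ (StrongDual ℝ Y)) :=
    hYrefl.denseRange.separableSpace (inclusionInDoubleDual ℝ Y).continuous
  have : SeparableSpace (StrongDual ℝ Y) :=
    separableSpace_of_separableSpace_strongDual (E := StrongDual ℝ Y)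
  obtain ⟨y, ψ, hψ, hy⟩ := exists_strictMono_forall_dual_tendsto_of_separableSpace hYrefl
    (a := fun k => ⟨a k, haY k⟩) hM
  exact ⟨y, ψ, hψ, fun f => hy (f.comp Y.subtypeL)⟩

end Reflexive

section WeakLimits

variable {X : Type*} [NormedAddCommGroup X] [NormedSpace ℝ X]

theorem IsClosed.mem_of_forall_dual_tendsto {s : Set X} (hsc : IsClosed s) (hs : Convex ℝ s)
    {a : ℕ → X} {x : X} (ha : ∀ k, a k ∈ s)
    (hx : ∀ f : StrongDual ℝ X, Tendsto (fun k => f (a k)) atTop (𝓝 (f x))) : x ∈ s := by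
  by_contra hxs
  obtain ⟨f, u, hfs, hux⟩ := geometric_hahn_banach_closed_point hs hsc hxs
  exact (le_of_tendsto (hx f) (Eventually.of_forall fun k => (hfs _ (ha k)).le)).not_gt hux

theorem forall_dual_tendsto_of_tendsto_dist {a b : ℕ → X} {x : X}
    (ha : ∀ f : StrongDual ℝ X, Tendsto (fun k => f (a k)) atTop (𝓝 (f x)))
    (hab : Tendsto (fun k => dist (a k) (b k)) atTop (𝓝 0)) :
    ∀ f : StrongDual ℝ X, Tendsto (fun k => f (b k)) atTop (𝓝 (f x)) := fun f =>
  (ha f).congr_dist <| squeeze_zero (fun _ => dist_nonneg)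
    (fun k => f.lipschitz.dist_le_mul (a k) (b k)) (by simpa using hab.const_mul (‖f‖₊ : ℝ))

theorem Convex.setOf_ball_subset {U : Set X} (hU : Convex ℝ U) (ρ : ℝ) :
    Convex ℝ {z | ball z ρ ⊆ U} := by
  have : {z | ball z ρ ⊆ U} = ⋂ v ∈ ball (0 : X) ρ, (fun z => z + v) ⁻¹' U := by
    ext z
    simp only [mem_ofPred_eq, mem_iInter, mem_preimage]
    refine ⟨fun h v hv => h (by simpa using hv), fun h w hw => ?_⟩
    simpa using h (w - z) (by simpa [dist_eq_norm] using hw)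
  rw [this]
  exact convex_iInter₂ fun v _ => hU.translate_preimage_left v

theorem EssInt.mem_of_forall_dual_tendsto {U V : Set X} (hU : Convex ℝ U) (hV : EssInt U V)
    {a : ℕ → X} {x : X} (ha : ∀ k, a k ∈ V)
    (hx : ∀ f : StrongDual ℝ X, Tendsto (fun k => f (a k)) atTop (𝓝 (f x))) : x ∈ U := by
  obtain ⟨ρ, hρ, hball⟩ := hV
  have hx' : x ∈ closure {z | ball z ρ ⊆ U} :=
    isClosed_closure.mem_of_forall_dual_tendsto (hU.setOf_ball_subset ρ).closure
      (fun k => subset_closure (hball _ (ha k))) hx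
  obtain ⟨z, hz, hxz⟩ := Metric.mem_closure_iff.mp hx' ρ hρ
  exact hz (mem_ball.mpr hxz)

end WeakLimits

theorem stmt14_general {X : Type*} [NormedAddCommGroup X] [NormedSpace ℝ X]
    (hrefl : Function.Surjective (NormedSpace.inclusionInDoubleDual ℝ X))
    (φ1 φ2 : X → EReal)
    (U : Set X) (hconv : Convex ℝ U) (hbd : Bornology.IsBounded U)
    (hwlsc1 : ∀ x ∈ U, ∀ xk : ℕ → X, (∀ k, xk k ∈ U) →
      (∀ f : X →L[ℝ] ℝ, Filter.Tendsto (fun k => f (xk k)) Filter.atTop (nhds (f x))) →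
      φ1 x ≤ Filter.liminf (fun k => φ1 (xk k)) Filter.atTop)
    (hwlsc2 : ∀ x ∈ U, ∀ xk : ℕ → X, (∀ k, xk k ∈ U) →
      (∀ f : X →L[ℝ] ℝ, Filter.Tendsto (fun k => f (xk k)) Filter.atTop (nhds (f x))) →
      φ2 x ≤ Filter.liminf (fun k => φ2 (xk k)) Filter.atTop) :
    infSum φ1 φ2 U ≤ lambdaDag φ1 φ2 U := by
  refine le_iInf fun ⟨V, hV⟩ => le_of_forall_gt_imp_ge_of_dense fun t ht => ?_
  choose x1 hx1 x2 hx2 hdist hsum using fun k : ℕ =>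
    exists_lt_of_lambdaCirc_lt ht (Nat.one_div_pos_of_nat (n := k))
  obtain ⟨C, hC⟩ := hbd.exists_norm_le
  obtain ⟨x, ψ, hψ, hlim1⟩ :=
    exists_strictMono_forall_dual_tendsto hrefl fun k => hC _ (hV.subset (hx1 k))
  have hxU : x ∈ U := hV.mem_of_forall_dual_tendsto hconv (fun k => hx1 (ψ k)) hlim1
  have hlim2 := forall_dual_tendsto_of_tendsto_dist hlim1 <|
    (squeeze_zero (fun _ => dist_nonneg) (fun k => (hdist k).le)
      tendsto_one_div_add_atTop_nhds_zero_nat).comp hψ.tendsto_atTop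
  calc infSum φ1 φ2 U ≤ φ1 x + φ2 x := sInf_le ⟨x, hxU, rfl⟩
    _ ≤ liminf (fun k => φ1 (x1 (ψ k)) + φ2 (x2 (ψ k))) atTop :=
      (add_le_add (hwlsc1 x hxU _ (fun k => hV.subset (hx1 _)) hlim1)
        (hwlsc2 x hxU _ (fun k => hV.subset (hx2 _)) hlim2)).trans EReal.le_liminf_add
    _ ≤ t := liminf_le_of_frequently_le' (Frequently.of_forall fun k => (hsum _).le)

/-- In a reflexive Banach space, a pair of weakly sequentially lower semicontinuous
functions is quasiuniformly lower semicontinuous on any convex bounded set. -/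
theorem stmt14 {X : Type*} [NormedAddCommGroup X] [NormedSpace ℝ X] [CompleteSpace X]
    (hrefl : Function.Surjective (NormedSpace.inclusionInDoubleDual ℝ X))
    (φ1 φ2 : X → EReal) (hbot1 : ∀ x, φ1 x ≠ ⊥) (hbot2 : ∀ x, φ2 x ≠ ⊥)
    (U : Set X) (hconv : Convex ℝ U) (hbd : Bornology.IsBounded U)
    (hne : ∃ x ∈ U, φ1 x < ⊤ ∧ φ2 x < ⊤)
    (hwlsc1 : ∀ x ∈ U, ∀ xk : ℕ → X, (∀ k, xk k ∈ U) →
      (∀ f : X →L[ℝ] ℝ, Filter.Tendsto (fun k => f (xk k)) Filter.atTop (nhds (f x))) →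
      φ1 x ≤ Filter.liminf (fun k => φ1 (xk k)) Filter.atTop)
    (hwlsc2 : ∀ x ∈ U, ∀ xk : ℕ → X, (∀ k, xk k ∈ U) →
      (∀ f : X →L[ℝ] ℝ, Filter.Tendsto (fun k => f (xk k)) Filter.atTop (nhds (f x))) →
      φ2 x ≤ Filter.liminf (fun k => φ2 (xk k)) Filter.atTop) :
    infSum φ1 φ2 U ≤ lambdaDag φ1 φ2 U :=
  stmt14_general hrefl φ1 φ2 U hconv hbd hwlsc1 hwlsc2
end
end

section
/- Let Ω1, Ω2 ⊂ X and x̄ ∈ Ω1 ∩ Ω2. The pair of indicator functions (i_{Ω1}, i_{Ω2}) is firmly quasiuniformly lower semicontinuous near x̄ if and only if there exists δ > 0 such that for every ε > 0 there exists η > 0 with: for all x ∈ B_δ(x̄), if dist(x,Ω1) < η and dist(x,Ω2) < η then dist(x, Ω1 ∩ Ω2) < ε (i.e. limsup_{x∈B_δ(x̄), dist(x,Ω1)→0, dist(x,Ω2)→0} dist(x, Ω1∩Ω2) = 0). -/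
/-!
For indicator functions, `(i_{Ω1} ♦ i_{Ω2})_U(x1, x2) < ε` holds exactly when some point of
`U ∩ Ω1 ∩ Ω2` lies within `ε` of both `x1` and `x2`. Hence `Θ†_U = 0` says: points of `Ω1` and `Ω2`
in an essentially interior subset of `U` that are close to each other are close to a common point
of `U ∩ Ω1 ∩ Ω2`. Near `x̄` this is the distance condition, since a point close to both sets is
close to such a pair, and a point of `Ω1` close to `Ω2` is itself close to both sets. Passing
between the balls of radius `r < R` around `x̄` absorbs the shifts by `η` and `ε`, with `B_s(x̄)`,
`r < s < R`, essentially interior in `B̄_R(x̄)`.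
-/

open Metric Set Filter

noncomputable section

lemma indFn_of_mem {X : Type*} {Ω : Set X} {x : X} (h : x ∈ Ω) : indFn Ω x = 0 := by
  simp [indFn, h]

lemma indFn_lt_top_iff {X : Type*} {Ω : Set X} {x : X} : indFn Ω x < ⊤ ↔ x ∈ Ω := by
  by_cases h : x ∈ Ω <;> simp [indFn, h]

lemma indFn_add_indFn {X : Type*} (Ω1 Ω2 : Set X) (x : X) :
    indFn Ω1 x + indFn Ω2 x = indFn (Ω1 ∩ Ω2) x := by
  by_cases h1 : x ∈ Ω1 <;> by_cases h2 : x ∈ Ω2 <;> simp [indFn, h1, h2]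

lemma diamond_indFn_lt_iff {X : Type*} [MetricSpace X] {Ω1 Ω2 W : Set X} {x1 x2 : X}
    (hx1 : x1 ∈ Ω1) (hx2 : x2 ∈ Ω2) {ε : ℝ} :
    diamond (indFn Ω1) (indFn Ω2) W x1 x2 < ε ↔
      ∃ x ∈ W ∩ (Ω1 ∩ Ω2), dist x x1 < ε ∧ dist x x2 < ε := by
  simp only [diamond, sInf_lt_iff, mem_ofPred_eq, indFn_of_mem hx1, indFn_of_mem hx2, sub_zero,
    indFn_add_indFn]
  constructor
  · rintro ⟨_, ⟨x, hxW, rfl⟩, hlt⟩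
    simp only [max_lt_iff, EReal.coe_lt_coe_iff] at hlt
    exact ⟨x, ⟨hxW, indFn_lt_top_iff.mp (hlt.2.trans (EReal.coe_lt_top ε))⟩, hlt.1⟩
  · rintro ⟨x, ⟨hxW, hx⟩, hd1, hd2⟩
    refine ⟨_, ⟨x, hxW, rfl⟩, ?_⟩
    simp only [max_lt_iff, EReal.coe_lt_coe_iff, indFn_of_mem hx]
    exact ⟨⟨hd1, hd2⟩, EReal.coe_pos.mpr (dist_nonneg.trans_lt hd1)⟩

lemma iInf_sSup_insert_zero_le_zero_iff {ι : Sort*} {A : ι → Set EReal} :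
    (⨅ i, sSup (insert 0 (A i))) ≤ 0 ↔ ∀ ε : ℝ, 0 < ε → ∃ i, ∀ a ∈ A i, a < ε := by
  constructor
  · intro h ε hε
    obtain ⟨i, hlt⟩ := iInf_lt_iff.mp (h.trans_lt (EReal.coe_pos.mpr hε))
    exact ⟨i, fun a ha => (le_sSup (mem_insert_of_mem 0 ha)).trans_lt hlt⟩
  · intro h
    refine EReal.le_of_forall_lt_iff_le.mp fun ε hε => ?_
    obtain ⟨i, hA⟩ := h ε (EReal.coe_pos.mp hε)
    refine iInf_le_of_le i (sSup_le ?_)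
    rintro a (rfl | ha)
    exacts [hε.le, (hA a ha).le]

lemma thetaDagW_eq_zero_iff {X : Type*} [MetricSpace X] {φ1 φ2 : X → EReal} {U W : Set X} :
    thetaDagW φ1 φ2 U W = 0 ↔ ∀ V, EssInt U V → ∀ ε : ℝ, 0 < ε → ∃ η : ℝ, 0 < η ∧
      ∀ x1 x2, φ1 x1 < ⊤ → x1 ∈ V → φ2 x2 < ⊤ → x2 ∈ V → dist x1 x2 < η →
        diamond φ1 φ2 W x1 x2 < ε := by
  have hnonneg : 0 ≤ thetaDagW φ1 φ2 U W :=
    le_iSup_of_le ⟨∅, 1, one_pos, by simp⟩ (le_iInf fun _ => le_sSup (mem_insert _ _))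
  rw [← hnonneg.ge_iff_eq', thetaDagW, iSup_le_iff, Subtype.forall]
  refine forall₂_congr fun V _ => iInf_sSup_insert_zero_le_zero_iff.trans ?_
  simp only [Subtype.exists, exists_prop, mem_ofPred_eq]
  grind

lemma thetaDag_indFn_eq_zero_iff {X : Type*} [MetricSpace X] {Ω1 Ω2 U : Set X} :
    thetaDag (indFn Ω1) (indFn Ω2) U = 0 ↔ ∀ V, EssInt U V → ∀ ε : ℝ, 0 < ε → ∃ η : ℝ, 0 < η ∧
      ∀ x1 x2, x1 ∈ Ω1 → x1 ∈ V → x2 ∈ Ω2 → x2 ∈ V → dist x1 x2 < η →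
        ∃ x ∈ U ∩ (Ω1 ∩ Ω2), dist x x1 < ε ∧ dist x x2 < ε := by
  simp +contextual only [thetaDag, thetaDagW_eq_zero_iff, indFn_lt_top_iff, diamond_indFn_lt_iff]

lemma essInt_closedBall_ball {X : Type*} [MetricSpace X] {x : X} {r R : ℝ} (h : r < R) :
    EssInt (closedBall x R) (ball x r) :=
  ⟨R - r, sub_pos.mpr h, fun _ hv =>
    (ball_subset_ball' (by linarith [mem_ball.mp hv])).trans ball_subset_closedBall⟩

lemma infDist_inter_lt_of_thetaDag_indFn_eq_zero {X : Type*} [MetricSpace X] {Ω1 Ω2 : Set X}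
    (hne : (Ω1 ∩ Ω2).Nonempty) {x₀ : X} {r R : ℝ} (hr : r < R)
    (h : thetaDag (indFn Ω1) (indFn Ω2) (closedBall x₀ R) = 0) {ε : ℝ} (hε : 0 < ε) :
    ∃ η : ℝ, 0 < η ∧ ∀ x ∈ ball x₀ r, infDist x Ω1 < η → infDist x Ω2 < η →
      infDist x (Ω1 ∩ Ω2) < ε := by
  obtain ⟨s, hrs, hsR⟩ := exists_between hr
  obtain ⟨η, hη, hP⟩ := thetaDag_indFn_eq_zero_iff.mp h (ball x₀ s)
    (essInt_closedBall_ball hsR) (ε / 2) (half_pos hε)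
  refine ⟨min (η / 2) (min (s - r) (ε / 2)),
    lt_min (half_pos hη) (lt_min (sub_pos.mpr hrs) (half_pos hε)), fun x hx h1 h2 => ?_⟩
  obtain ⟨x1, hx1, hd1⟩ := (infDist_lt_iff (hne.mono inter_subset_left)).mp h1
  obtain ⟨x2, hx2, hd2⟩ := (infDist_lt_iff (hne.mono inter_subset_right)).mp h2
  simp only [lt_min_iff] at hd1 hd2
  have mem_ball_s : ∀ y, dist x y < s - r → y ∈ ball x₀ s := fun y hy =>
    ball_subset_ball' (by linarith [mem_ball.mp hx]) (mem_ball'.mpr hy)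
  obtain ⟨y, ⟨-, hy⟩, hy1, -⟩ := hP x1 x2 hx1 (mem_ball_s x1 hd1.2.1) hx2 (mem_ball_s x2 hd2.2.1)
    (by linarith [dist_triangle_left x1 x2 x])
  calc infDist x (Ω1 ∩ Ω2) ≤ dist x y := infDist_le_dist_of_mem hy
    _ ≤ dist x x1 + dist y x1 := dist_triangle_right _ _ _
    _ < ε := by linarith

lemma thetaDag_indFn_closedBall_eq_zero {X : Type*} [MetricSpace X] {Ω1 Ω2 : Set X}
    (hne : (Ω1 ∩ Ω2).Nonempty) {x₀ : X} {r R : ℝ} (hr : r < R)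
    (H : ∀ ε : ℝ, 0 < ε → ∃ η : ℝ, 0 < η ∧ ∀ x ∈ ball x₀ R, infDist x Ω1 < η →
      infDist x Ω2 < η → infDist x (Ω1 ∩ Ω2) < ε) :
    thetaDag (indFn Ω1) (indFn Ω2) (closedBall x₀ r) = 0 := by
  refine thetaDag_indFn_eq_zero_iff.mpr ?_
  rintro V ⟨ρ, hρ, hVU⟩ ε hε
  obtain ⟨η, hη, hH⟩ := H (min (ε / 2) ρ) (lt_min (half_pos hε) hρ)
  refine ⟨min η (ε / 2), lt_min hη (half_pos hε), fun x1 x2 h1 hx1 h2 hx2 hd => ?_⟩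
  simp only [lt_min_iff] at hd
  have hx1U : x1 ∈ closedBall x₀ r := hVU x1 hx1 (mem_ball_self hρ)
  obtain ⟨x, hx, hdx⟩ := (infDist_lt_iff hne).mp <| hH x1 (closedBall_subset_ball hr hx1U)
    (by rwa [infDist_zero_of_mem h1]) ((infDist_le_dist_of_mem h2).trans_lt hd.1)
  simp only [lt_min_iff] at hdx
  refine ⟨x, ⟨hVU x1 hx1 (mem_ball'.mpr hdx.2), hx⟩, by rw [dist_comm]; linarith, ?_⟩
  linarith [dist_triangle x x1 x2, dist_comm x x1]

/-- Characterization of firm quasiuniform lower semicontinuity of a pair of indicator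
functions near a point of the intersection. -/
theorem stmt15 {X : Type*} [MetricSpace X] (Ω1 Ω2 : Set X) (x₀ : X)
    (hx₀ : x₀ ∈ Ω1 ∩ Ω2) :
    (∃ δ0 : ℝ, 0 < δ0 ∧ ∀ δ : ℝ, 0 < δ → δ ≤ δ0 →
        thetaDag (indFn Ω1) (indFn Ω2) (Metric.closedBall x₀ δ) = 0) ↔
      ∃ δ : ℝ, 0 < δ ∧ ∀ ε : ℝ, 0 < ε → ∃ η : ℝ, 0 < η ∧
        ∀ x ∈ Metric.ball x₀ δ, Metric.infDist x Ω1 < η → Metric.infDist x Ω2 < η →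
          Metric.infDist x (Ω1 ∩ Ω2) < ε := by
  constructor
  · rintro ⟨δ0, hδ0, H⟩
    exact ⟨δ0 / 2, half_pos hδ0, fun ε hε => infDist_inter_lt_of_thetaDag_indFn_eq_zero
      ⟨x₀, hx₀⟩ (half_lt_self hδ0) (H δ0 hδ0 le_rfl) hε⟩
  · rintro ⟨δ, hδ, H⟩
    exact ⟨δ / 2, half_pos hδ, fun r _ hr =>
      thetaDag_indFn_closedBall_eq_zero ⟨x₀, hx₀⟩ (hr.trans_lt (half_lt_self hδ)) H⟩
end
end

section
/- Let X be a finite-dimensional Banach space, Ω1, Ω2 ⊂ X closed sets, and U ⊂ X a bounded set with Ω1 ∩ Ω2 ∩ U ≠ ∅. Then the pair of indicator functions (i_{Ω1}, i_{Ω2}) is firmly quasiuniformly lower semicontinuous on U, i.e. Θ†_U(i_{Ω1}, i_{Ω2}) = 0. -/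
open Metric Set Filter

noncomputable section

/-!
An essentially interior subset `V` of the bounded set `U` has compact closure inside `U`.
By compactness, points of `Ω1 ∩ V` and `Ω2 ∩ V` that are close enough to each other are both
`ε`-close to a single point of `Ω1 ∩ Ω2 ∩ U`, and for indicator functions the `♦`-expression
at such a point is just the larger of these two distances.
-/

lemma IsCompact.exists_pos_near_inter {X : Type*} [PseudoMetricSpace X] {Ω1 Ω2 K : Set X}
    (hK : IsCompact K) (h1 : IsClosed Ω1) (h2 : IsClosed Ω2) {ε : ℝ} (hε : 0 < ε) :
    ∃ η > 0, ∀ x1 ∈ Ω1 ∩ K, ∀ x2 ∈ Ω2, dist x1 x2 < η →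
      ∃ x ∈ Ω1 ∩ Ω2 ∩ K, dist x x1 < ε ∧ dist x x2 < ε := by
  -- The points of `Ω1 ∩ K` that are not `ε/2`-close to `Ω1 ∩ Ω2 ∩ K` form a compact set
  -- disjoint from `Ω2`, hence a uniform distance away from it.
  set A := Ω1 ∩ K ∩ (thickening (ε / 2) (Ω1 ∩ Ω2 ∩ K))ᶜ
  have hA : IsCompact A :=
    (hK.inter_left h1).inter_right isOpen_thickening.isClosed_compl
  have hAΩ2 : A ⊆ Ω2ᶜ := by
    rintro x ⟨⟨hx1, hxK⟩, hx⟩ hx2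
    exact hx (self_subset_thickening (half_pos hε) _ ⟨⟨hx1, hx2⟩, hxK⟩)
  obtain ⟨δ, hδ, hδA⟩ := hA.exists_thickening_subset_open h2.isOpen_compl hAΩ2
  refine ⟨min δ (ε / 2), lt_min hδ (half_pos hε), fun x1 hx1 x2 hx2 hd => ?_⟩
  have hx1T : x1 ∈ thickening (ε / 2) (Ω1 ∩ Ω2 ∩ K) := by
    by_contra hx1T
    refine hδA (mem_thickening_iff.2 ⟨x1, ⟨hx1, hx1T⟩, ?_⟩) hx2
    rw [dist_comm]
    exact hd.trans_le (min_le_left _ _)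
  obtain ⟨x, hx, hxx1⟩ := mem_thickening_iff.1 hx1T
  refine ⟨x, hx, by rw [dist_comm]; linarith, ?_⟩
  calc dist x x2 ≤ dist x x1 + dist x1 x2 := dist_triangle _ _ _
    _ < ε / 2 + ε / 2 := by
      rw [dist_comm x]; exact add_lt_add hxx1 (hd.trans_le (min_le_right _ _))
    _ = ε := add_halves ε

lemma EssInt.closure_subset {X : Type*} [MetricSpace X] {U V : Set X} (h : EssInt U V) :
    closure V ⊆ U := by
  obtain ⟨ρ, hρ, hball⟩ := h
  intro y hy
  obtain ⟨v, hv, hyv⟩ := Metric.mem_closure_iff.1 hy ρ hρ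
  exact hball v hv hyv

lemma essInt_empty {X : Type*} [MetricSpace X] (U : Set X) : EssInt U ∅ :=
  ⟨1, one_pos, by simp⟩

lemma mem_of_indFn_lt_top {X : Type*} {Ω : Set X} {x : X} (h : indFn Ω x < ⊤) : x ∈ Ω := by
  by_contra hx
  simp [indFn, hx] at h

lemma diamond_indFn_le {X : Type*} [MetricSpace X] {Ω1 Ω2 W : Set X} {x x1 x2 : X}
    (hx : x ∈ Ω1 ∩ Ω2 ∩ W) (hx1 : x1 ∈ Ω1) (hx2 : x2 ∈ Ω2) :
    diamond (indFn Ω1) (indFn Ω2) W x1 x2 ≤ max ((dist x x1 : ℝ) : EReal) (dist x x2 : ℝ) := by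
  unfold diamond
  refine le_trans (sInf_le (Set.mem_ofPred.2 ⟨x, hx.2, rfl⟩)) (le_of_eq ?_)
  simp [indFn_of_mem hx.1.1, indFn_of_mem hx.1.2, indFn_of_mem hx1, indFn_of_mem hx2]

lemma thetaDagW_nonneg {X : Type*} [MetricSpace X] (φ1 φ2 : X → EReal) (U W : Set X) :
    0 ≤ thetaDagW φ1 φ2 U W :=
  le_iSup_of_le ⟨∅, essInt_empty U⟩ (le_iInf fun _ => le_sSup (mem_insert _ _))

lemma iInf_sSup_insert_zero_le_zero {S : {η : ℝ // 0 < η} → Set EReal}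
    (h : ∀ ε > (0 : ℝ), ∃ η, ∀ v ∈ S η, v ≤ ε) :
    ⨅ η, sSup (insert 0 (S η)) ≤ 0 := by
  refine le_of_forall_gt_imp_ge_of_dense fun c hc => ?_
  obtain ⟨ε, hε, hεc⟩ := EReal.lt_iff_exists_real_btwn.1 hc
  obtain ⟨η, hS⟩ := h ε (EReal.coe_pos.1 hε)
  refine (iInf_le _ η).trans ((sSup_le ?_).trans hεc.le)
  rintro v (rfl | hv)
  exacts [hε.le, hS v hv]

theorem stmt16_general {X : Type*} [NormedAddCommGroup X] [NormedSpace ℝ X]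
    [FiniteDimensional ℝ X] (Ω1 Ω2 : Set X)
    (h1 : IsClosed Ω1) (h2 : IsClosed Ω2)
    (U : Set X) (hbd : Bornology.IsBounded U) :
    thetaDag (indFn Ω1) (indFn Ω2) U = 0 := by
  refine le_antisymm (iSup_le fun ⟨V, hV⟩ => ?_) (thetaDagW_nonneg _ _ U U)
  have hK : IsCompact (closure V) :=
    (hbd.subset (subset_closure.trans hV.closure_subset)).isCompact_closure
  refine iInf_sSup_insert_zero_le_zero fun ε hε => ?_
  obtain ⟨η, hη, hnear⟩ := hK.exists_pos_near_inter h1 h2 hε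
  refine ⟨⟨η, hη⟩, ?_⟩
  rintro _ ⟨x1, x2, ht1, hx1, ht2, -, hd, rfl⟩
  have hx1Ω : x1 ∈ Ω1 := mem_of_indFn_lt_top ht1
  have hx2Ω : x2 ∈ Ω2 := mem_of_indFn_lt_top ht2
  obtain ⟨x, ⟨hx12, hxV⟩, hxx1, hxx2⟩ := hnear x1 ⟨hx1Ω, subset_closure hx1⟩ x2 hx2Ω hd
  refine (diamond_indFn_le ⟨hx12, hV.closure_subset hxV⟩ hx1Ω hx2Ω).trans ?_
  exact max_le (mod_cast hxx1.le) (mod_cast hxx2.le)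

/-- In a finite-dimensional Banach space, a pair of indicator functions of closed sets
is firmly quasiuniformly lower semicontinuous on any bounded set. -/
theorem stmt16 {X : Type*} [NormedAddCommGroup X] [NormedSpace ℝ X]
    [FiniteDimensional ℝ X] (Ω1 Ω2 : Set X)
    (h1 : IsClosed Ω1) (h2 : IsClosed Ω2)
    (U : Set X) (hbd : Bornology.IsBounded U) (hne : (Ω1 ∩ Ω2 ∩ U).Nonempty) :
    thetaDag (indFn Ω1) (indFn Ω2) U = 0 :=
  stmt16_general Ω1 Ω2 h1 h2 U hbd
end
end

section
/- Let X be a complete metric space, φ1, φ2 : X → ℝ ∪ {+∞} lower semicontinuous, ε > 0, δ > 0 and x̄ ∈ dom φ1 ∩ dom φ2. Suppose x̄ is a quasiuniform ε-minimum of φ1+φ2 on B_δ(x̄) and φ1 and φ2 are bounded from below on B_δ(x̄). Then there exists ρ̄ ∈ (0,δ) such that for every ρ ∈ (ρ̄, δ) and every η > 0 there exist a number γ > 0 and points x̂1, x̂2 ∈ X satisfying: (i) max{d(x̂1,x̄), d(x̂2,x̄)} < ρ; (ii) d(x̂1,x̂2) < η; (iii) φ_γ(x̂1,x̂2) ≤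 (φ1+φ2)(x̄); and (iv) for all u1, u2 ∈ B̄_ρ(x̄) with (u1,u2) ≠ (x̂1,x̂2), φ_γ(x̂1,x̂2) − φ_γ(u1,u2) < (2ε/δ) · max{d(u1,x̂1), d(u2,x̂2)}; where φ_γ(u1,u2) := φ1(u1) + φ2(u2) + γ d(u1,u2). -/
/-!
On `W = closedBall x₀ ρ`, an essentially interior subset of `ball x₀ δ`, quasiuniform
`ε`-minimality yields `η₀ > 0` such that `φ1 x1 + φ2 x2 > (φ1 + φ2) x₀ - ε` whenever
`x1, x2 ∈ W` are `η₀`-close. Choose `γ` so large that the penalty `γ d(u1, u2)` lifts every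
pair with `d(u1, u2) ≥ min η η₀` above the level `(φ1 + φ2) x₀`, and apply Ekeland's
variational principle with constant `2ε/δ` to `φ_γ = penalizedSum φ1 φ2 γ` on `W × W`,
starting from `(x₀, x₀)`. The Ekeland point does not increase `φ_γ`, so its coordinates are
`min η η₀`-close, its value exceeds `(φ1 + φ2) x₀ - ε`, and therefore it lies within `δ/2`
of `(x₀, x₀)`; its strict minimality is (iv).

Ekeland's principle (for `EReal`-valued functions) follows from Cantor's intersection theorem
applied to the nested sets `{z | F z + σ d(z, p) ≤ F p}` along an almost-minimizing sequence.
-/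

open Metric Set Filter

noncomputable section

section QuasiuniformInfimum

variable {X : Type*} [MetricSpace X]

lemma essInt_ball_closedBall {x : X} {ρ δ : ℝ} (h : ρ < δ) :
    EssInt (ball x δ) (closedBall x ρ) :=
  ⟨δ - ρ, sub_pos.2 h, fun v hv =>
    ball_subset_ball' (by linarith [mem_closedBall.1 hv])⟩

lemma lambdaDag_le_lambdaCirc (φ1 φ2 : X → EReal) {U V : Set X} (h : EssInt U V) :
    lambdaDag φ1 φ2 U ≤ lambdaCirc φ1 φ2 V :=
  iInf_le (fun V : {V : Set X // EssInt U V} => lambdaCirc φ1 φ2 V.1) ⟨V, h⟩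

lemma exists_pos_forall_lt_of_lt_lambdaCirc {φ1 φ2 : X → EReal} {W : Set X} {c : EReal}
    (h : c < lambdaCirc φ1 φ2 W) :
    ∃ η > 0, ∀ x1 ∈ W, ∀ x2 ∈ W, dist x1 x2 < η → c < φ1 x1 + φ2 x2 := by
  obtain ⟨⟨η, hη⟩, hc⟩ := lt_iSup_iff.1 h
  exact ⟨η, hη, fun x1 hx1 x2 hx2 hd => hc.trans_le (sInf_le ⟨x1, hx1, x2, hx2, hd, rfl⟩)⟩

end QuasiuniformInfimum

lemma exists_mem_forall_le_add {Y : Type*} {F : Y → EReal} {m : ℝ} {s : Set Y} (hs : s.Nonempty)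
    (hm : ∀ y ∈ s, (m : EReal) ≤ F y) {t : ℝ} (ht : 0 < t) : ∃ q ∈ s, ∀ z ∈ s, F q ≤ F z + t := by
  by_cases hinf : sInf (F '' s) = ⊤
  · obtain ⟨q, hq⟩ := hs
    refine ⟨q, hq, fun z hz => ?_⟩
    rw [sInf_eq_top.1 hinf _ (mem_image_of_mem F hz), EReal.top_add_coe]
    exact le_top
  · have hbot : sInf (F '' s) ≠ ⊥ :=
      ((EReal.bot_lt_coe m).trans_le (le_sInf (forall_mem_image.2 hm))).ne'
    obtain ⟨I, hI⟩ : ∃ I : ℝ, sInf (F '' s) = I := ⟨_, (EReal.coe_toReal hinf hbot).symm⟩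
    have hlt : sInf (F '' s) < sInf (F '' s) + t := by
      rw [hI]; exact_mod_cast lt_add_of_pos_right I ht
    obtain ⟨_, ⟨q, hq, rfl⟩, hqI⟩ := sInf_lt_iff.1 hlt
    exact ⟨q, hq, fun z hz => hqI.le.trans (by gcongr; exact sInf_le (mem_image_of_mem F hz))⟩

section Ekeland

variable {Y : Type*} [MetricSpace Y] {F : Y → EReal} {σ m : ℝ} {p q z : Y}

def ekelandSet (F : Y → EReal) (σ : ℝ) (p : Y) : Set Y :=
  {z | F z + ((σ * dist z p : ℝ) : EReal) ≤ F p}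

lemma self_mem_ekelandSet (p : Y) : p ∈ ekelandSet F σ p := by
  simp [ekelandSet]

lemma le_of_mem_ekelandSet (hσ : 0 ≤ σ) (hz : z ∈ ekelandSet F σ p) : F z ≤ F p :=
  (le_add_of_nonneg_right (EReal.coe_nonneg.2 (mul_nonneg hσ dist_nonneg))).trans hz

lemma ekelandSet_subset (hσ : 0 ≤ σ) (hq : q ∈ ekelandSet F σ p) :
    ekelandSet F σ q ⊆ ekelandSet F σ p := fun z hz => calc
  F z + ((σ * dist z p : ℝ) : EReal)
      ≤ F z + ((σ * dist z q : ℝ) : EReal) + ((σ * dist q p : ℝ) : EReal) := by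
        rw [add_assoc, ← EReal.coe_add, ← mul_add]
        gcongr
        exact dist_triangle z q p
  _ ≤ F q + ((σ * dist q p : ℝ) : EReal) := by gcongr; exact hz
  _ ≤ F p := hq

lemma isClosed_ekelandSet (hF : LowerSemicontinuous F) (p : Y) :
    IsClosed (ekelandSet F σ p) := by
  have hpen : Continuous fun z => ((σ * dist z p : ℝ) : EReal) :=
    continuous_coe_real_ereal.comp (by fun_prop)
  have hsum : LowerSemicontinuous fun z => F z + ((σ * dist z p : ℝ) : EReal) :=
    hF.add' hpen.lowerSemicontinuous fun z =>
      EReal.continuousAt_add (.inr (EReal.coe_ne_bot _)) (.inr (EReal.coe_ne_top _))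
  exact hsum.isClosed_preimage (F p)

lemma exists_mem_ekelandSet_subset_closedBall (hσ : 0 < σ) (hm : ∀ y, (m : EReal) ≤ F y)
    (hp : F p ≠ ⊤) {r : ℝ} (hr : 0 < r) :
    ∃ q ∈ ekelandSet F σ p, ekelandSet F σ q ⊆ closedBall q r := by
  obtain ⟨q, hq, hqmin⟩ := exists_mem_forall_le_add ⟨p, self_mem_ekelandSet p⟩
    (fun y _ => hm y) (mul_pos hσ hr)
  refine ⟨q, hq, fun z hz => mem_closedBall.2 ?_⟩
  have hzq : F z + ((σ * dist z q : ℝ) : EReal) ≤ F z + ((σ * r : ℝ) : EReal) :=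
    hz.trans (hqmin z (ekelandSet_subset hσ.le hq hz))
  have hztop : F z ≠ ⊤ :=
    ((le_of_mem_ekelandSet hσ.le hz).trans (le_of_mem_ekelandSet hσ.le hq)).trans_lt hp.lt_top |>.ne
  lift F z to ℝ using ⟨hztop, ((EReal.bot_lt_coe m).trans_le (hm z)).ne'⟩ with a
  have : a + σ * dist z q ≤ a + σ * r := by exact_mod_cast hzq
  exact le_of_mul_le_mul_left (le_of_add_le_add_left this) hσ

theorem ekeland_variational_principle [CompleteSpace Y] (hF : LowerSemicontinuous F)
    (hm : ∀ y, (m : EReal) ≤ F y) (hσ : 0 < σ) {y₀ : Y} (h₀ : F y₀ ≠ ⊤) :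
    ∃ y, F y + ((σ * dist y y₀ : ℝ) : EReal) ≤ F y₀ ∧
      ∀ z, z ≠ y → F y < F z + ((σ * dist z y : ℝ) : EReal) := by
  let P := {p : Y // F p ≠ ⊤}
  have hstep : ∀ (n : ℕ) (p : P), ∃ q : P,
      q.1 ∈ ekelandSet F σ p.1 ∧ ekelandSet F σ q.1 ⊆ closedBall q.1 (1 / (n + 1)) := by
    intro n p
    obtain ⟨q, hq, hball⟩ := exists_mem_ekelandSet_subset_closedBall hσ hm p.2
      (by positivity : (0 : ℝ) < 1 / (n + 1))
    exact ⟨⟨q, ne_top_of_le_ne_top p.2 (le_of_mem_ekelandSet hσ.le hq)⟩, hq, hball⟩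
  choose next hnext hball using hstep
  let u : ℕ → P := fun n => Nat.rec ⟨y₀, h₀⟩ next n
  let S : ℕ → Set Y := fun n => ekelandSet F σ (u (n + 1)).1
  have hS_anti : Antitone S :=
    antitone_nat_of_succ_le fun n => ekelandSet_subset hσ.le (hnext _ _)
  have hS_ball : ∀ n, S n ⊆ closedBall (u (n + 1)).1 (1 / (n + 1)) := fun n => hball _ _
  have hS_diam : ∀ n, diam (S n) ≤ 2 * (1 / (n + 1)) := fun n =>
    (diam_mono (hS_ball n) isBounded_closedBall).trans (diam_closedBall (by positivity))
  have hdiam : Tendsto (fun n => diam (S n)) atTop (nhds 0) := by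
    have := (tendsto_one_div_add_atTop_nhds_zero_nat).const_mul (2 : ℝ)
    rw [mul_zero] at this
    exact squeeze_zero (fun n => diam_nonneg) hS_diam this
  obtain ⟨y, hy⟩ := nonempty_iInter_of_nonempty_biInter (fun n => isClosed_ekelandSet hF _)
    (fun n => isBounded_closedBall.subset (hS_ball n))
    (fun N => ⟨(u (N + 1 + 1)).1, mem_iInter₂.2 fun n hn => hS_anti hn (hnext _ _)⟩)
    hdiam
  rw [mem_iInter] at hy
  refine ⟨y, ekelandSet_subset hσ.le (hnext 0 (u 0)) (hy 0), fun z hzy => ?_⟩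
  by_contra! hz
  have hzS : ∀ n, z ∈ S n := fun n => ekelandSet_subset hσ.le (hy n) hz
  have hdist : dist z y ≤ 0 := ge_of_tendsto' hdiam fun n =>
    dist_le_diam_of_mem (isBounded_closedBall.subset (hS_ball n)) (hzS n) (hy n)
  exact hzy (dist_le_zero.1 hdist)

theorem ekeland_variational_principle_of_isClosed [CompleteSpace Y] {K : Set Y} (hK : IsClosed K)
    (hF : LowerSemicontinuous F) (hm : ∀ y ∈ K, (m : EReal) ≤ F y) (hσ : 0 < σ) {y₀ : Y}
    (hy₀ : y₀ ∈ K) (h₀ : F y₀ ≠ ⊤) :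
    ∃ y ∈ K, F y + ((σ * dist y y₀ : ℝ) : EReal) ≤ F y₀ ∧
      ∀ z ∈ K, z ≠ y → F y < F z + ((σ * dist z y : ℝ) : EReal) := by
  have := hK.completeSpace_coe
  obtain ⟨y, hy₀y, hy⟩ := ekeland_variational_principle (F := fun y : K => F y)
    (hF.comp continuous_subtype_val) (fun y => hm y y.2) hσ (y₀ := ⟨y₀, hy₀⟩) h₀
  exact ⟨y, y.2, hy₀y, fun z hz hzy => hy ⟨z, hz⟩ fun h => hzy (congrArg Subtype.val h)⟩

end Ekeland

section Penalization

variable {X : Type*} [MetricSpace X] {φ1 φ2 : X → EReal}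

def penalizedSum (φ1 φ2 : X → EReal) (γ : ℝ) (u : X × X) : EReal :=
  φ1 u.1 + φ2 u.2 + ((γ * dist u.1 u.2 : ℝ) : EReal)

@[simp]
lemma penalizedSum_self (γ : ℝ) (x : X) : penalizedSum φ1 φ2 γ (x, x) = φ1 x + φ2 x := by
  simp [penalizedSum]

lemma lowerSemicontinuous_penalizedSum (hbot1 : ∀ x, φ1 x ≠ ⊥) (hbot2 : ∀ x, φ2 x ≠ ⊥)
    (hlsc1 : LowerSemicontinuous φ1) (hlsc2 : LowerSemicontinuous φ2) (γ : ℝ) :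
    LowerSemicontinuous (penalizedSum φ1 φ2 γ) := by
  have hsum : LowerSemicontinuous fun u : X × X => φ1 u.1 + φ2 u.2 :=
    (hlsc1.comp continuous_fst).add' (hlsc2.comp continuous_snd) fun u =>
      EReal.continuousAt_add (.inr (hbot2 _)) (.inl (hbot1 _))
  have hpen : Continuous fun u : X × X => ((γ * dist u.1 u.2 : ℝ) : EReal) :=
    continuous_coe_real_ereal.comp (by fun_prop)
  exact hsum.add' hpen.lowerSemicontinuous fun u =>
    EReal.continuousAt_add (.inr (EReal.coe_ne_bot _)) (.inr (EReal.coe_ne_top _))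

lemma le_penalizedSum {m1 m2 γ : ℝ} {u : X × X} (h1 : (m1 : EReal) ≤ φ1 u.1)
    (h2 : (m2 : EReal) ≤ φ2 u.2) :
    ((m1 + m2 + γ * dist u.1 u.2 : ℝ) : EReal) ≤ penalizedSum φ1 φ2 γ u := by
  rw [EReal.coe_add, EReal.coe_add]
  exact add_le_add (add_le_add h1 h2) le_rfl

lemma dist_lt_of_penalizedSum_le {m1 m2 γ η s : ℝ} {u : X × X} (h1 : (m1 : EReal) ≤ φ1 u.1)
    (h2 : (m2 : EReal) ≤ φ2 u.2) (hγ : 0 ≤ γ) (hγη : s < m1 + m2 + γ * η)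
    (hu : penalizedSum φ1 φ2 γ u ≤ s) : dist u.1 u.2 < η := by
  by_contra! hη
  have : m1 + m2 + γ * dist u.1 u.2 ≤ s := by exact_mod_cast (le_penalizedSum h1 h2).trans hu
  nlinarith

end Penalization

theorem exists_penalizedSum_ekeland_point {X : Type*} [MetricSpace X] [CompleteSpace X]
    {φ1 φ2 : X → EReal} (hbot1 : ∀ x, φ1 x ≠ ⊥) (hbot2 : ∀ x, φ2 x ≠ ⊥)
    (hlsc1 : LowerSemicontinuous φ1) (hlsc2 : LowerSemicontinuous φ2)
    {W : Set X} (hW : IsClosed W) {x₀ : X} (hx₀ : x₀ ∈ W) (htop : φ1 x₀ + φ2 x₀ ≠ ⊤)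
    {m1 m2 : ℝ} (hm1 : ∀ x ∈ W, (m1 : EReal) ≤ φ1 x) (hm2 : ∀ x ∈ W, (m2 : EReal) ≤ φ2 x)
    {ε η σ : ℝ} (hη : 0 < η) (hσ : 0 < σ)
    (hsep : ∀ x1 ∈ W, ∀ x2 ∈ W, dist x1 x2 < η → φ1 x₀ + φ2 x₀ - ε < φ1 x1 + φ2 x2) :
    ∃ γ > 0, ∃ xh ∈ W ×ˢ W, σ * dist xh (x₀, x₀) < ε ∧ dist xh.1 xh.2 < η ∧
      penalizedSum φ1 φ2 γ xh ≤ φ1 x₀ + φ2 x₀ ∧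
      ∀ u ∈ W ×ˢ W, u ≠ xh →
        penalizedSum φ1 φ2 γ xh < penalizedSum φ1 φ2 γ u + ((σ * dist u xh : ℝ) : EReal) := by
  lift φ1 x₀ + φ2 x₀ to ℝ using ⟨htop, EReal.add_ne_bot_iff.2 ⟨hbot1 x₀, hbot2 x₀⟩⟩ with s hs
  -- large enough that pairs at distance `≥ η` lie above the level `s` of `(x₀, x₀)`
  set γ := (|s - (m1 + m2)| + 1) / η
  have hγ : 0 < γ := by positivity
  have hγη : s < m1 + m2 + γ * η := by
    rw [div_mul_cancel₀ _ hη.ne']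
    linarith [le_abs_self (s - (m1 + m2))]
  have hbdd : ∀ u ∈ W ×ˢ W, ((m1 + m2 : ℝ) : EReal) ≤ penalizedSum φ1 φ2 γ u := fun u hu =>
    (EReal.coe_le_coe_iff.2 (by nlinarith [dist_nonneg (x := u.1) (y := u.2)])).trans
      (le_penalizedSum (hm1 _ hu.1) (hm2 _ hu.2))
  obtain ⟨xh, hxh, hxh₀, hmin⟩ := ekeland_variational_principle_of_isClosed (hW.prod hW)
    (lowerSemicontinuous_penalizedSum hbot1 hbot2 hlsc1 hlsc2 γ) hbdd hσ (mk_mem_prod hx₀ hx₀)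
    (by simp [← hs])
  rw [penalizedSum_self, ← hs] at hxh₀
  have hle : penalizedSum φ1 φ2 γ xh ≤ s :=
    (le_add_of_nonneg_right (EReal.coe_nonneg.2 (by positivity))).trans hxh₀
  have hnear : dist xh.1 xh.2 < η :=
    dist_lt_of_penalizedSum_le (hm1 _ hxh.1) (hm2 _ hxh.2) hγ.le hγη hle
  have hgt : (s : EReal) - ε < penalizedSum φ1 φ2 γ xh :=
    (hsep _ hxh.1 _ hxh.2 hnear).trans_le
      (le_add_of_nonneg_right (EReal.coe_nonneg.2 (by positivity)))
  refine ⟨γ, hγ, xh, hxh, ?_, hnear, hle, hmin⟩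
  lift penalizedSum φ1 φ2 γ xh to ℝ using ⟨hle.trans_lt (EReal.coe_lt_top s) |>.ne,
    ne_bot_of_gt hgt⟩ with t
  have : t + σ * dist xh (x₀, x₀) ≤ s := by exact_mod_cast hxh₀
  have : s - ε < t := by exact_mod_cast hgt
  linarith

/-- Primal necessary conditions for a quasiuniform `ε`-minimum of `φ1 + φ2`. -/
theorem stmt18 {X : Type*} [MetricSpace X] [CompleteSpace X]
    (φ1 φ2 : X → EReal) (hbot1 : ∀ x, φ1 x ≠ ⊥) (hbot2 : ∀ x, φ2 x ≠ ⊥)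
    (hlsc1 : LowerSemicontinuous φ1) (hlsc2 : LowerSemicontinuous φ2)
    (ε δ : ℝ) (hε : 0 < ε) (hδ : 0 < δ)
    (x₀ : X) (hx₀1 : φ1 x₀ < ⊤) (hx₀2 : φ2 x₀ < ⊤)
    (hmin : φ1 x₀ + φ2 x₀ < lambdaDag φ1 φ2 (Metric.ball x₀ δ) + (ε : EReal))
    (hbd1 : ∃ m : ℝ, ∀ x ∈ Metric.ball x₀ δ, (m : EReal) ≤ φ1 x)
    (hbd2 : ∃ m : ℝ, ∀ x ∈ Metric.ball x₀ δ, (m : EReal) ≤ φ2 x) :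
    ∃ ρ0 : ℝ, 0 < ρ0 ∧ ρ0 < δ ∧ ∀ ρ : ℝ, ρ0 < ρ → ρ < δ → ∀ η : ℝ, 0 < η →
      ∃ γ : ℝ, 0 < γ ∧ ∃ xh1 xh2 : X,
        max (dist xh1 x₀) (dist xh2 x₀) < ρ ∧
        dist xh1 xh2 < η ∧
        φ1 xh1 + φ2 xh2 + ((γ * dist xh1 xh2 : ℝ) : EReal) ≤ φ1 x₀ + φ2 x₀ ∧
        ∀ u1 ∈ Metric.closedBall x₀ ρ, ∀ u2 ∈ Metric.closedBall x₀ ρ,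
          (u1, u2) ≠ (xh1, xh2) →
          (φ1 xh1 + φ2 xh2 + ((γ * dist xh1 xh2 : ℝ) : EReal)) -
              (φ1 u1 + φ2 u2 + ((γ * dist u1 u2 : ℝ) : EReal)) <
            ((2 * ε / δ * max (dist u1 xh1) (dist u2 xh2) : ℝ) : EReal) := by
  obtain ⟨m1, hm1⟩ := hbd1
  obtain ⟨m2, hm2⟩ := hbd2
  refine ⟨δ / 2, by linarith, by linarith, fun ρ hρ hρδ η hη => ?_⟩
  have hWδ : closedBall x₀ ρ ⊆ ball x₀ δ := closedBall_subset_ball hρδ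
  obtain ⟨η₀, hη₀, hsep⟩ := exists_pos_forall_lt_of_lt_lambdaCirc <| EReal.sub_lt_of_lt_add <|
    hmin.trans_le (add_le_add_left (lambdaDag_le_lambdaCirc φ1 φ2 (essInt_ball_closedBall hρδ)) _)
  obtain ⟨γ, hγ, xh, hxh, hclose, hnear, hle, hmin⟩ :=
    exists_penalizedSum_ekeland_point hbot1 hbot2 hlsc1 hlsc2 isClosed_closedBall
      (mem_closedBall_self (by linarith)) (EReal.add_lt_top hx₀1.ne hx₀2.ne).ne
      (fun x hx => hm1 x (hWδ hx)) (fun x hx => hm2 x (hWδ hx)) (lt_min hη hη₀)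
      (by positivity : 0 < 2 * ε / δ)
      (fun x1 hx1 x2 hx2 hd => hsep x1 hx1 x2 hx2 (hd.trans_le (min_le_right _ _)))
  refine ⟨γ, hγ, xh.1, xh.2, ?_, hnear.trans_le (min_le_left _ _), hle,
    fun u1 hu1 u2 hu2 hne => EReal.sub_lt_of_lt_add' (hmin (u1, u2) ⟨hu1, hu2⟩ hne)⟩
  have hσδ : 2 * ε / δ * (δ / 2) = ε := by field_simp
  exact (lt_of_mul_lt_mul_left (hclose.trans_eq hσδ.symm) (by positivity)).trans hρ
end
end
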